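/- arXiv:0705.3925 — 4 statements merged into one kernel-verified Lean document; each statement's English description precedes it below -/
import Mathlib

section
/- For real numbers x_1 > x_2 > ⋯ > x_{2l} (all distinct) and a function f with f(x) ≠ 0 for all x, the Pfaffian of the 2l×2l antisymmetric matrix with (j,k) entry (f(x_j)/f(x_k))^{sgn(x_j - x_k)} · sgn(x_j - x_k) equals ∏_{j=1}^{l} f(x_{2j-1})/f(x_{2j}). -/
open Finset

/-- The first element of the `i`-th pair in `Fin (2*n)`. -/
def pairLo {n : ℕ} (i : Fin n) : Fin (2 * n) := ⟨2 * i.1, by have := i.isLt; omega⟩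

/-- The second element of the `i`-th pair in `Fin (2*n)`. -/
def pairHi {n : ℕ} (i : Fin n) : Fin (2 * n) := ⟨2 * i.1 + 1, by have := i.isLt; omega⟩

/-- The Pfaffian of a `2n × 2n` matrix, defined as the sum over perfect matchings
(encoded as permutations in canonical form) of the signed product of entries. -/
def pf {n : ℕ} {R : Type*} [CommRing R] (A : Matrix (Fin (2 * n)) (Fin (2 * n)) R) : R :=
  ∑ σ ∈ Finset.univ.filter
      (fun σ : Equiv.Perm (Fin (2 * n)) =>
        (∀ i : Fin n, σ (pairLo i) < σ (pairHi i)) ∧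
        ∀ i j : Fin n, i < j → σ (pairLo i) < σ (pairLo j)),
    (Equiv.Perm.sign σ : ℤ) • ∏ i : Fin n, A (σ (pairLo i)) (σ (pairHi i))

/-- The integer sign of the difference `a - b` of two reals. -/
noncomputable def sgnz (a b : ℝ) : ℤ := if b < a then 1 else if a < b then -1 else 0

/-!
For `a < b` the `(a, b)` entry is `f (x a) / f (x b)`, so the term of a perfect matching in the
Pfaffian is the product of `f (x a)` over the smaller endpoints `a` of its pairs divided by the
product of `f (x b)` over the larger endpoints `b`. Swapping the larger endpoints of two pairs
`{a, b}`, `{a', b'}` with `a < a' < min b b'` keeps both endpoint sets, hence the weight, and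
reverses the sign of the matching. Doing this for the first pair whose successor starts before it
ends is a sign-reversing, weight-preserving involution on all matchings but
`{0, 1}, {2, 3}, …`, whose term is the right-hand side.
-/

open Equiv

variable {n : ℕ}

lemma pairLo_injective : Function.Injective (pairLo (n := n)) := fun i j h => by
  simpa [pairLo, Fin.ext_iff] using h

lemma pairHi_injective : Function.Injective (pairHi (n := n)) := fun i j h => by
  simpa [pairHi, Fin.ext_iff] using h

lemma pairLo_ne_pairHi (i j : Fin n) : pairLo i ≠ pairHi j := by
  simp only [pairLo, pairHi, ne_eq, Fin.ext_iff]
  omega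

@[simp] lemma pairLo_lt_pairLo_iff {i j : Fin n} : pairLo i < pairLo j ↔ i < j := by
  simp only [pairLo, Fin.lt_def]
  omega

@[simp] lemma pairLo_lt_pairHi_iff {i j : Fin n} : pairLo i < pairHi j ↔ i ≤ j := by
  simp only [pairLo, pairHi, Fin.lt_def, Fin.le_def]
  omega

@[simp] lemma pairHi_lt_pairLo_iff {i j : Fin n} : pairHi i < pairLo j ↔ i < j := by
  simp only [pairLo, pairHi, Fin.lt_def]
  omega

@[simp] lemma pairHi_lt_pairHi_iff {i j : Fin n} : pairHi i < pairHi j ↔ i < j := by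
  simp only [pairHi, Fin.lt_def]
  omega

lemma exists_eq_pairLo_or_eq_pairHi (p : Fin (2 * n)) : ∃ i, p = pairLo i ∨ p = pairHi i :=
  ⟨⟨p / 2, by omega⟩, by simp only [pairLo, pairHi, Fin.ext_iff]; omega⟩

def matchingPerms (n : ℕ) : Finset (Perm (Fin (2 * n))) :=
  univ.filter fun σ => (∀ i, σ (pairLo i) < σ (pairHi i)) ∧
    ∀ i j : Fin n, i < j → σ (pairLo i) < σ (pairLo j)

lemma mem_matchingPerms {σ : Perm (Fin (2 * n))} :
    σ ∈ matchingPerms n ↔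
      (∀ i, σ (pairLo i) < σ (pairHi i)) ∧ StrictMono fun i => σ (pairLo i) := by
  simp [matchingPerms, StrictMono]

lemma pf_eq_sum_matchingPerms {R : Type*} [CommRing R] (A : Matrix (Fin (2 * n)) (Fin (2 * n)) R) :
    pf A = ∑ σ ∈ matchingPerms n, (Perm.sign σ : ℤ) • ∏ i, A (σ (pairLo i)) (σ (pairHi i)) :=
  rfl

lemma one_mem_matchingPerms : (1 : Perm (Fin (2 * n))) ∈ matchingPerms n :=
  mem_matchingPerms.2 ⟨fun i => by simp, fun i j hij => by simpa using hij⟩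

section Crossing

variable {σ : Perm (Fin (2 * n))} {i j : Fin n}

/-- `i` is the first pair of the matching `σ` that has not ended when a later pair starts, and
`j` is the pair right after it. -/
def IsFirstCrossing (σ : Perm (Fin (2 * n))) (i j : Fin n) : Prop :=
  j.1 = i.1 + 1 ∧ σ (pairLo j) < σ (pairHi i) ∧
    ∀ i' j' : Fin n, i' < j' → σ (pairLo j') < σ (pairHi i') → i ≤ i'

lemma eq_one_of_forall_pairHi_lt_pairLo (hlo : ∀ i, σ (pairLo i) < σ (pairHi i))
    (hmono : StrictMono fun i => σ (pairLo i))
    (hdisj : ∀ i j, i < j → σ (pairHi i) < σ (pairLo j)) : σ = 1 := by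
  have hσ : StrictMono σ := by
    intro p q hpq
    obtain ⟨i, rfl | rfl⟩ := exists_eq_pairLo_or_eq_pairHi p <;>
      obtain ⟨j, rfl | rfl⟩ := exists_eq_pairLo_or_eq_pairHi q
    · exact hmono (pairLo_lt_pairLo_iff.1 hpq)
    · exact (hmono.monotone (pairLo_lt_pairHi_iff.1 hpq)).trans_lt (hlo j)
    · exact hdisj i j (pairHi_lt_pairLo_iff.1 hpq)
    · exact (hdisj i j (pairHi_lt_pairHi_iff.1 hpq)).trans (hlo j)
  exact Equiv.ext fun p => hσ.apply_eq

lemma exists_isFirstCrossing (hlo : ∀ i, σ (pairLo i) < σ (pairHi i))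
    (hmono : StrictMono fun i => σ (pairLo i)) (hσ : σ ≠ 1) : ∃ i j, IsFirstCrossing σ i j := by
  have hcross : ∃ i j, i < j ∧ σ (pairLo j) < σ (pairHi i) := by
    by_contra! h
    exact hσ (eq_one_of_forall_pairHi_lt_pairLo hlo hmono fun i j hij =>
      (h i j hij).lt_of_ne (σ.injective.ne (pairLo_ne_pairHi j i).symm))
  obtain ⟨i, ⟨j₀, hij₀, hj₀⟩, hmin⟩ :=
    wellFounded_lt.has_min {i | ∃ j, i < j ∧ σ (pairLo j) < σ (pairHi i)} hcross
  have hsucc : i.1 + 1 < n := by omega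
  refine ⟨i, ⟨i.1 + 1, hsucc⟩, rfl, ?_, fun i' j' hij' h' => not_lt.1 (hmin i' ⟨j', hij', h'⟩)⟩
  exact (hmono.monotone (Fin.le_def.2 (by simp only; omega))).trans_lt hj₀

lemma IsFirstCrossing.lt (h : IsFirstCrossing σ i j) : i < j :=
  Fin.lt_def.2 (by have := h.1; omega)

lemma IsFirstCrossing.unique {i' j' : Fin n} (h : IsFirstCrossing σ i j)
    (h' : IsFirstCrossing σ i' j') : i = i' ∧ j = j' := by
  have hi : i = i' := le_antisymm (h.2.2 i' j' h'.lt h'.2.1) (h'.2.2 i j h.lt h.2.1)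
  exact ⟨hi, Fin.ext (by rw [h.1, h'.1, hi])⟩

lemma IsFirstCrossing.ne_one (h : IsFirstCrossing σ i j) : σ ≠ 1 := by
  rintro rfl
  exact not_le.2 h.lt (pairLo_lt_pairHi_iff.1 h.2.1)

open Classical in
noncomputable def uncross (σ : Perm (Fin (2 * n))) : Perm (Fin (2 * n)) :=
  if h : ∃ i j, IsFirstCrossing σ i j then
    σ * swap (pairHi h.choose) (pairHi h.choose_spec.choose)
  else σ

lemma IsFirstCrossing.uncross_eq (h : IsFirstCrossing σ i j) :
    uncross σ = σ * swap (pairHi i) (pairHi j) := by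
  have hex : ∃ i j, IsFirstCrossing σ i j := ⟨i, j, h⟩
  obtain ⟨rfl, rfl⟩ := h.unique hex.choose_spec.choose_spec
  rw [uncross, dif_pos hex]

lemma mul_swap_pairHi_apply_pairLo (σ : Perm (Fin (2 * n))) (i j m : Fin n) :
    (σ * swap (pairHi i) (pairHi j)) (pairLo m) = σ (pairLo m) := by
  rw [Perm.mul_apply, swap_apply_of_ne_of_ne (pairLo_ne_pairHi m i) (pairLo_ne_pairHi m j)]

lemma mul_swap_pairHi_apply_pairHi (σ : Perm (Fin (2 * n))) (i j m : Fin n) :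
    (σ * swap (pairHi i) (pairHi j)) (pairHi m) = σ (pairHi (swap i j m)) := by
  rw [Perm.mul_apply, pairHi_injective.swap_apply]

lemma sign_mul_swap_pairHi (σ : Perm (Fin (2 * n))) (hij : i ≠ j) :
    Perm.sign (σ * swap (pairHi i) (pairHi j)) = -Perm.sign σ := by
  rw [Perm.sign_mul, Perm.sign_swap (pairHi_injective.ne hij), mul_neg_one]

lemma IsFirstCrossing.mul_swap (hlo : ∀ i, σ (pairLo i) < σ (pairHi i))
    (h : IsFirstCrossing σ i j) : IsFirstCrossing (σ * swap (pairHi i) (pairHi j)) i j := by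
  refine ⟨h.1, ?_, fun i' j' hij' h' => ?_⟩
  · rw [mul_swap_pairHi_apply_pairLo, mul_swap_pairHi_apply_pairHi, swap_apply_left]
    exact hlo j
  · by_contra! hi'
    rw [mul_swap_pairHi_apply_pairLo, mul_swap_pairHi_apply_pairHi,
      swap_apply_of_ne_of_ne hi'.ne (hi'.trans h.lt).ne] at h'
    exact not_le.2 hi' (h.2.2 i' j' hij' h')

lemma IsFirstCrossing.mul_swap_mem_matchingPerms (hσ : σ ∈ matchingPerms n)
    (h : IsFirstCrossing σ i j) : σ * swap (pairHi i) (pairHi j) ∈ matchingPerms n := by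
  obtain ⟨hlo, hmono⟩ := mem_matchingPerms.1 hσ
  refine mem_matchingPerms.2 ⟨fun m => ?_, fun a b hab => ?_⟩
  · rw [mul_swap_pairHi_apply_pairLo, mul_swap_pairHi_apply_pairHi]
    rcases eq_or_ne m i with rfl | hmi
    · rw [swap_apply_left]
      exact (hmono h.lt).trans (hlo j)
    rcases eq_or_ne m j with rfl | hmj
    · rw [swap_apply_right]
      exact h.2.1
    · rw [swap_apply_of_ne_of_ne hmi hmj]
      exact hlo m
  · simpa only [mul_swap_pairHi_apply_pairLo] using hmono hab

end Crossing

section Weight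

variable {R : Type*} [CommRing R] {A : Matrix (Fin (2 * n)) (Fin (2 * n)) R}
  {u v : Fin (2 * n) → R}

lemma prod_apply_pairLo_pairHi_eq (hA : ∀ a b, a < b → A a b = u a * v b)
    {σ : Perm (Fin (2 * n))} (hlo : ∀ i, σ (pairLo i) < σ (pairHi i)) :
    ∏ i, A (σ (pairLo i)) (σ (pairHi i)) = (∏ i, u (σ (pairLo i))) * ∏ i, v (σ (pairHi i)) := by
  rw [← prod_mul_distrib]
  exact prod_congr rfl fun i _ => hA _ _ (hlo i)

lemma prod_mul_swap_pairHi_eq (hA : ∀ a b, a < b → A a b = u a * v b)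
    {σ : Perm (Fin (2 * n))} {i j : Fin n} (hlo : ∀ m, σ (pairLo m) < σ (pairHi m))
    (hlo' : ∀ m, (σ * swap (pairHi i) (pairHi j)) (pairLo m) <
      (σ * swap (pairHi i) (pairHi j)) (pairHi m)) :
    ∏ m, A ((σ * swap (pairHi i) (pairHi j)) (pairLo m))
        ((σ * swap (pairHi i) (pairHi j)) (pairHi m)) =
      ∏ m, A (σ (pairLo m)) (σ (pairHi m)) := by
  rw [prod_apply_pairLo_pairHi_eq hA hlo', prod_apply_pairLo_pairHi_eq hA hlo]
  simp only [mul_swap_pairHi_apply_pairLo, mul_swap_pairHi_apply_pairHi]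
  rw [Equiv.prod_comp (swap i j) fun m => v (σ (pairHi m))]

lemma sum_erase_one_matchingPerms_eq_zero (hA : ∀ a b, a < b → A a b = u a * v b) :
    ∑ σ ∈ (matchingPerms n).erase 1,
      (Perm.sign σ : ℤ) • ∏ i, A (σ (pairLo i)) (σ (pairHi i)) = 0 := by
  refine sum_involution (fun σ _ => uncross σ) ?_ ?_ ?_ ?_ <;> intro σ hσ₁ <;>
    have hσ := mem_of_mem_erase hσ₁ <;>
    obtain ⟨hlo, hmono⟩ := mem_matchingPerms.1 hσ <;>
    obtain ⟨i, j, h⟩ := exists_isFirstCrossing hlo hmono (ne_of_mem_erase hσ₁) <;>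
    rw [h.uncross_eq]
  · rw [prod_mul_swap_pairHi_eq hA hlo (mem_matchingPerms.1 (h.mul_swap_mem_matchingPerms hσ)).1,
      sign_mul_swap_pairHi σ h.lt.ne, Units.val_neg, neg_smul, add_neg_cancel]
  · intro _ heq
    have := congrArg (· (pairHi i)) heq
    simp only [mul_swap_pairHi_apply_pairHi, swap_apply_left] at this
    exact h.lt.ne' (pairHi_injective (σ.injective this))
  · exact mem_erase.2 ⟨(h.mul_swap hlo).ne_one, h.mul_swap_mem_matchingPerms hσ⟩
  · rw [(h.mul_swap hlo).uncross_eq, mul_swap_mul_self]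

theorem pf_eq_prod_of_apply_eq_mul (A : Matrix (Fin (2 * n)) (Fin (2 * n)) R)
    (u v : Fin (2 * n) → R) (hA : ∀ a b, a < b → A a b = u a * v b) :
    pf A = ∏ i, A (pairLo i) (pairHi i) := by
  rw [pf_eq_sum_matchingPerms, ← add_sum_erase _ _ one_mem_matchingPerms,
    sum_erase_one_matchingPerms_eq_zero hA, add_zero]
  simp

end Weight

theorem pf_sign_ratio_matrix_general (l : ℕ) (x : Fin (2 * l) → ℝ) (hx : StrictAnti x)
    (f : ℝ → ℝ) :
    pf (Matrix.of fun j k : Fin (2 * l) =>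
      (f (x j) / f (x k)) ^ (sgnz (x j) (x k)) * (sgnz (x j) (x k) : ℝ)) =
    ∏ i : Fin l, f (x (pairLo i)) / f (x (pairHi i)) := by
  set M : Matrix (Fin (2 * l)) (Fin (2 * l)) ℝ := Matrix.of fun j k =>
    (f (x j) / f (x k)) ^ (sgnz (x j) (x k)) * (sgnz (x j) (x k) : ℝ)
  have hM : ∀ a b, a < b → M a b = f (x a) / f (x b) := fun a b hab => by
    have hsgn : sgnz (x a) (x b) = 1 := if_pos (hx hab)
    simp [M, hsgn]
  rw [pf_eq_prod_of_apply_eq_mul M (fun a => f (x a)) (fun b => (f (x b))⁻¹) hM]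
  exact prod_congr rfl fun i _ => hM _ _ (pairLo_lt_pairHi_iff.2 le_rfl)

/-- for `x_1 > x_2 > ⋯ > x_{2l}` and `f` nowhere vanishing, the Pfaffian of the
antisymmetric matrix with `(j,k)` entry `(f(x_j)/f(x_k))^{sgn(x_j - x_k)} · sgn(x_j - x_k)`
equals `∏_{j=1}^{l} f(x_{2j-1})/f(x_{2j})`. -/
theorem pf_sign_ratio_matrix (l : ℕ) (x : Fin (2 * l) → ℝ) (hx : StrictAnti x)
    (f : ℝ → ℝ) (hf : ∀ t, f t ≠ 0) :
    pf (Matrix.of fun j k : Fin (2 * l) =>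
      (f (x j) / f (x k)) ^ (sgnz (x j) (x k)) * (sgnz (x j) (x k) : ℝ)) =
    ∏ i : Fin l, f (x (pairLo i)) / f (x (pairHi i)) :=
  pf_sign_ratio_matrix_general l x hx f
end

section
/- For a partition μ with μ_1 ≤ n and variables b_1,…,b_n, the sum of weights over all families of n non-intersecting up/right-horizontal lattice paths starting at (0, -(l-1)) for l = 1,…,n and ending at (n-1, μ_l - (l-1)), where each up step at x = j-1 is weighted b_j, equals the Schur polynomial s_μ(b_1,…,b_n). Equivalently (via semistandard tableaux): s_μ(b_1,…,b_n) = Σ over semistandard Young tableaux T of shape μ with entries in {1,…,n} of ∏_j b_j^{(number of j's in T)}. -/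
/-!
Lindström–Gessel–Viennot. Expanding the Jacobi–Trudi determinant writes `s_μ` as a signed sum
over pairs `(σ, D)` of a permutation and a family of lattice paths: path `k` starts at
`(0, -k)`, climbs `D k l` steps in column `l`, and ends at height `μ (σ k) - σ k`; its weight
is `∏ b_l ^ (number of up-steps in column l)`. Exchanging the tails of the two lowest-indexed
paths through the lexicographically first crossing is a weight-preserving involution that
flips the sign of `σ`, so only non-crossing families survive. Since `μ` is a partition these
have `σ = 1`, and reading `D i j` as the number of entries `j` in row `i` of a tableau,
non-crossing is exactly column-strictness.
-/

open Finset

/-- The complete homogeneous symmetric polynomial `h_k` in `n` variables, evaluated at `x`. -/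
def hpoly {R : Type*} [CommRing R] (n k : ℕ) (x : Fin n → R) : R :=
  ∑ d ∈ Finset.Nat.antidiagonalTuple n k, ∏ i, x i ^ d i

/-- `h_k` extended to integer index: zero for negative `k`. -/
def hpolyZ {R : Type*} [CommRing R] (n : ℕ) (k : ℤ) (x : Fin n → R) : R :=
  if 0 ≤ k then hpoly n k.toNat x else 0

/-- The Schur polynomial `s_μ(x_1,…,x_n)` of a partition `μ` with at most `n` parts,
via the Jacobi–Trudi determinant `det[h_{μ_i - i + j}]_{i,j=1..n}`. -/
def schur {R : Type*} [CommRing R] (n : ℕ) (μ : Fin n → ℕ) (x : Fin n → R) : R :=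
  Matrix.det (Matrix.of fun i j : Fin n =>
    hpolyZ n ((μ i : ℤ) - ((i : ℕ) : ℤ) + ((j : ℕ) : ℤ)) x)

lemma Fin.mem_iff_lt_card_of_isLowerSet {n : ℕ} {s : Finset (Fin n)}
    (hs : IsLowerSet (s : Set (Fin n))) (c : Fin n) : c ∈ s ↔ (c : ℕ) < #s := by
  constructor
  · intro hc
    have := card_le_card fun a (ha : a ∈ Iic c) => hs (mem_Iic.1 ha) hc
    rw [Fin.card_Iic] at this
    omega
  · intro hc
    by_contra hcs
    have := card_le_card fun a (ha : a ∈ s) =>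
      mem_Iio.2 (lt_of_not_ge fun hca => hcs (hs hca ha))
    rw [Fin.card_Iio] at this
    omega

namespace JacobiTrudi

open Equiv

variable {n : ℕ}

section Paths

def extendByZero (d : Fin n → ℕ) (l : ℕ) : ℕ := if h : l < n then d ⟨l, h⟩ else 0

def partialSum (d : Fin n → ℕ) (m : ℕ) : ℕ := ∑ l ∈ range m, extendByZero d l

lemma partialSum_zero (d : Fin n → ℕ) : partialSum d 0 = 0 := rfl

lemma partialSum_succ (d : Fin n → ℕ) (m : ℕ) :
    partialSum d (m + 1) = partialSum d m + extendByZero d m :=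
  sum_range_succ _ _

lemma partialSum_succ_of_lt (d : Fin n → ℕ) {m : ℕ} (hm : m < n) :
    partialSum d (m + 1) = partialSum d m + d ⟨m, hm⟩ := by
  rw [partialSum_succ, extendByZero, dif_pos hm]

lemma partialSum_mono (d : Fin n → ℕ) : Monotone (partialSum d) :=
  fun _ _ h => sum_le_sum_of_subset (range_subset_range.2 h)

lemma partialSum_of_le (d : Fin n → ℕ) {m : ℕ} (hm : n ≤ m) : partialSum d m = ∑ j, d j := by
  rw [partialSum, ← sum_range_add_sum_Ico _ hm, ← Fin.sum_univ_eq_sum_range]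
  simp +contextual [extendByZero, sum_eq_zero, not_lt.2]

lemma partialSum_le_sum (d : Fin n → ℕ) (m : ℕ) : partialSum d m ≤ ∑ j, d j :=
  partialSum_of_le d (le_max_right m n) ▸ partialSum_mono d (le_max_left m n)

lemma eq_of_partialSum_eq {d d' : Fin n → ℕ} (h : ∀ m ≤ n, partialSum d m = partialSum d' m) :
    d = d' := by
  funext ⟨l, hl⟩
  have := h (l + 1) hl
  rw [partialSum_succ_of_lt d hl, partialSum_succ_of_lt d' hl, h l hl.le] at this
  omega

/-- The height after column `m` of the lattice path that starts at `(0, -i)` and climbs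
`d l` steps in column `l`. -/
def height (i : Fin n) (d : Fin n → ℕ) (m : ℕ) : ℤ := partialSum d m - (i : ℕ)

lemma height_zero (i : Fin n) (d : Fin n → ℕ) : height i d 0 = -(i : ℕ) := by
  simp [height, partialSum_zero]

lemma height_mono (i : Fin n) (d : Fin n → ℕ) : Monotone (height i d) :=
  fun _ _ h => by simpa [height] using partialSum_mono d h

lemma height_succ_of_lt (i : Fin n) (d : Fin n → ℕ) {m : ℕ} (hm : m < n) :
    height i d (m + 1) = height i d m + d ⟨m, hm⟩ := by
  rw [height, height, partialSum_succ_of_lt d hm]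
  push_cast
  ring

lemma height_of_le (i : Fin n) (d : Fin n → ℕ) {m : ℕ} (hm : n ≤ m) :
    height i d m = height i d n := by
  rw [height, height, partialSum_of_le d hm, partialSum_of_le d le_rfl]

/-- `(x, y)` lies on the vertical segment of the path in column `x`. -/
def OnPath (i : Fin n) (d : Fin n → ℕ) (x : ℕ) (y : ℤ) : Prop :=
  height i d x ≤ y ∧ y ≤ height i d (x + 1)

instance (i : Fin n) (d : Fin n → ℕ) (x : ℕ) (y : ℤ) : Decidable (OnPath i d x y) :=
  inferInstanceAs (Decidable (_ ∧ _))

end Paths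

section Families

def endpoint (μ : Fin n → ℕ) (j : Fin n) : ℤ := (μ j : ℤ) - ((j : ℕ) : ℤ)

/-- The step vectors of the paths from the start of path `k` to the end of path `j`. -/
def pathsTo (μ : Fin n → ℕ) (j k : Fin n) : Finset (Fin n → ℕ) :=
  if 0 ≤ endpoint μ j + (k : ℕ) then Nat.antidiagonalTuple n (endpoint μ j + (k : ℕ)).toNat
  else ∅

lemma mem_pathsTo {μ : Fin n → ℕ} {j k : Fin n} {d : Fin n → ℕ} :
    d ∈ pathsTo μ j k ↔ height k d n = endpoint μ j := by
  rw [height, partialSum_of_le d le_rfl, pathsTo]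
  split_ifs with h
  · rw [Nat.mem_antidiagonalTuple]
    omega
  · simp only [notMem_empty, false_iff]
    omega

/-- Pairs `(σ, D)` of a permutation and a path family in which path `k` ends at the end of
path `σ k`: the terms of the expanded Jacobi–Trudi determinant. -/
def families (μ : Fin n → ℕ) : Finset (Σ _ : Perm (Fin n), Fin n → Fin n → ℕ) :=
  univ.sigma fun σ => Fintype.piFinset fun k => pathsTo μ (σ k) k

lemma mem_families {μ : Fin n → ℕ} {c : Σ _ : Perm (Fin n), Fin n → Fin n → ℕ} :
    c ∈ families μ ↔ ∀ k, height k (c.2 k) n = endpoint μ (c.1 k) := by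
  simp [families, mem_pathsTo]

def weight {R : Type*} [CommMonoid R] (x : Fin n → R) (D : Fin n → Fin n → ℕ) : R :=
  ∏ i, ∏ j, x j ^ D i j

variable {R : Type*} [CommRing R]

lemma hpolyZ_endpoint_add (μ : Fin n → ℕ) (j k : Fin n) (x : Fin n → R) :
    hpolyZ n (endpoint μ j + (k : ℕ)) x = ∑ d ∈ pathsTo μ j k, ∏ l, x l ^ d l := by
  rw [hpolyZ, pathsTo]
  split_ifs <;> simp [hpoly]

lemma schur_eq_sum_families (μ : Fin n → ℕ) (x : Fin n → R) :
    schur n μ x = ∑ c ∈ families μ, (Perm.sign c.1 : R) * weight x c.2 := by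
  rw [schur, Matrix.det_apply', families, sum_sigma]
  refine sum_congr rfl fun σ _ => ?_
  simp only [Matrix.of_apply, ← endpoint.eq_def, hpolyZ_endpoint_add, prod_univ_sum, mul_sum]
  rfl

end Families

section TailSwap

/-- Row `k` of `D` up to column `x`, then row `k'` after it; the climb in column `x` joins
the two paths. -/
def switchRow (D : Fin n → Fin n → ℕ) (k k' : Fin n) (x : ℕ) : Fin n → ℕ := fun l =>
  if (l : ℕ) < x then D k l
  else if (l : ℕ) = x then (height k' (D k') (x + 1) - height k (D k) x).toNat
  else D k' l

variable {D : Fin n → Fin n → ℕ} {k k' : Fin n} {x : ℕ}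

lemma switchRow_apply_of_lt {l : Fin n} (hl : (l : ℕ) < x) : switchRow D k k' x l = D k l := by
  simp [switchRow, hl]

lemma switchRow_apply_self (hx : x < n) :
    switchRow D k k' x ⟨x, hx⟩ = (height k' (D k') (x + 1) - height k (D k) x).toNat := by
  simp [switchRow]

lemma switchRow_apply_of_gt {l : Fin n} (hl : x < l) : switchRow D k k' x l = D k' l := by
  simp [switchRow, hl.not_gt, hl.ne']

lemma partialSum_switchRow_of_le {m : ℕ} (hm : m ≤ x) :
    partialSum (switchRow D k k' x) m = partialSum (D k) m :=
  sum_congr rfl fun l hl => by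
    have : l < x := (mem_range.1 hl).trans_le hm
    simp [extendByZero, switchRow, this]

lemma height_switchRow_of_le {m : ℕ} (hm : m ≤ x) :
    height k (switchRow D k k' x) m = height k (D k) m := by
  rw [height, height, partialSum_switchRow_of_le hm]

lemma height_switchRow_of_lt (hx : x < n) (hkk' : height k (D k) x ≤ height k' (D k') (x + 1))
    {m : ℕ} (hm : x < m) : height k (switchRow D k k' x) m = height k' (D k') m := by
  induction m, hm using Nat.le_induction with
  | base =>
    rw [height_succ_of_lt _ _ hx, height_switchRow_of_le le_rfl, switchRow_apply_self hx,
      Int.toNat_of_nonneg (by omega)]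
    ring
  | succ m hxm ih =>
    rcases lt_or_ge m n with hm | hm
    · rw [height_succ_of_lt _ _ hm, height_succ_of_lt _ _ hm, ih,
        switchRow_apply_of_gt (l := ⟨m, hm⟩) hxm]
    · rw [height_of_le _ _ (Nat.le_succ_of_le hm), height_of_le _ (D k') (Nat.le_succ_of_le hm),
        ← height_of_le _ _ hm, ← height_of_le _ (D k') hm, ih]

/-- Paths `i` and `i'` exchange their parts after column `x`; any other row `k` becomes
`switchRow D k k x = D k`. -/
def tailSwap (D : Fin n → Fin n → ℕ) (i i' : Fin n) (x : ℕ) : Fin n → Fin n → ℕ :=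
  fun k => switchRow D k (swap i i' k) x

variable {i i' : Fin n} {y : ℤ}

lemma height_le_height_swap (hi : OnPath i (D i) x y) (hi' : OnPath i' (D i') x y) (k : Fin n) :
    height k (D k) x ≤ height (swap i i' k) (D (swap i i' k)) (x + 1) := by
  rcases eq_or_ne k i with rfl | hki
  · simpa using hi.1.trans hi'.2
  rcases eq_or_ne k i' with rfl | hki'
  · simpa using hi'.1.trans hi.2
  · rw [swap_apply_of_ne_of_ne hki hki']
    exact height_mono _ _ (Nat.le_succ x)

lemma height_tailSwap_of_le {k : Fin n} {m : ℕ} (hm : m ≤ x) :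
    height k (tailSwap D i i' x k) m = height k (D k) m :=
  height_switchRow_of_le hm

section

variable (hx : x < n) (hmeet : ∀ k, height k (D k) x ≤
  height (swap i i' k) (D (swap i i' k)) (x + 1))
include hx hmeet

lemma height_tailSwap (k : Fin n) (m : ℕ) :
    height k (tailSwap D i i' x k) m =
      if m ≤ x then height k (D k) m
      else height (swap i i' k) (D (swap i i' k)) m := by
  split_ifs with hm
  · exact height_switchRow_of_le hm
  · exact height_switchRow_of_lt hx (hmeet k) (not_le.1 hm)

lemma tailSwap_tailSwap : tailSwap (tailSwap D i i' x) i i' x = D := by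
  funext k l
  rcases lt_trichotomy (l : ℕ) x with hl | hl | hl
  · simp only [tailSwap, switchRow_apply_of_lt hl]
  · obtain rfl : l = ⟨x, hx⟩ := Fin.ext hl
    have h1 := height_tailSwap hx hmeet k x
    have h2 := height_tailSwap hx hmeet (swap i i' k) (x + 1)
    rw [if_pos le_rfl] at h1
    rw [if_neg (by omega), swap_apply_self] at h2
    rw [tailSwap, switchRow_apply_self hx, h1, h2, height_succ_of_lt _ _ hx]
    simp
  · simp only [tailSwap, switchRow_apply_of_gt hl, swap_apply_self]

lemma sum_tailSwap_apply (j : Fin n) : ∑ k, tailSwap D i i' x k j = ∑ k, D k j := by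
  rcases lt_trichotomy (j : ℕ) x with hj | hj | hj
  · simp only [tailSwap, switchRow_apply_of_lt hj]
  · obtain rfl : j = ⟨x, hx⟩ := Fin.ext hj
    simp only [tailSwap, switchRow_apply_self hx]
    zify
    simp only [Int.toNat_of_nonneg (sub_nonneg.2 (hmeet _))]
    rw [sum_sub_distrib, Equiv.sum_comp (swap i i')
      (fun k => height k (D k) (x + 1)), ← sum_sub_distrib]
    exact sum_congr rfl fun k _ => by rw [height_succ_of_lt _ _ hx]; ring
  · simp only [tailSwap, switchRow_apply_of_gt hj]
    exact Equiv.sum_comp (swap i i') (fun k => D k j)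

lemma weight_tailSwap {R : Type*} [CommMonoid R] (b : Fin n → R) :
    weight b (tailSwap D i i' x) = weight b D := by
  rw [weight, weight, prod_comm, prod_comm (f := fun i j => b j ^ D i j)]
  simp only [prod_pow_eq_pow_sum, sum_tailSwap_apply hx hmeet]

lemma mk_mul_swap_tailSwap_mem_families {μ : Fin n → ℕ} {σ : Perm (Fin n)}
    (h : ⟨σ, D⟩ ∈ families μ) : ⟨σ * swap i i', tailSwap D i i' x⟩ ∈ families μ := by
  rw [mem_families] at h ⊢
  intro k
  rw [height_tailSwap hx hmeet, if_neg (by omega)]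
  exact h _

end

lemma onPath_tailSwap_iff (hx : x < n) (hi : OnPath i (D i) x y) (hi' : OnPath i' (D i') x y)
    (k : Fin n) {u : ℕ} {v : ℤ} (huv : u < x ∨ u = x ∧ v ≤ y) :
    OnPath k (tailSwap D i i' x k) u v ↔ OnPath k (D k) u v := by
  rcases huv with hu | ⟨rfl, hv⟩
  · rw [OnPath, OnPath, height_tailSwap_of_le hu.le, height_tailSwap_of_le hu]
  have hend : v ≤ height (swap i i' k) (D (swap i i' k)) (u + 1) ↔
      v ≤ height k (D k) (u + 1) := by
    rcases eq_or_ne k i with rfl | hki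
    · rw [swap_apply_left]; exact iff_of_true (hv.trans hi'.2) (hv.trans hi.2)
    rcases eq_or_ne k i' with rfl | hki'
    · rw [swap_apply_right]; exact iff_of_true (hv.trans hi.2) (hv.trans hi'.2)
    · rw [swap_apply_of_ne_of_ne hki hki']
  have hmeet := height_le_height_swap hi hi'
  rw [OnPath, OnPath, height_tailSwap hx hmeet, height_tailSwap hx hmeet, if_pos le_rfl,
    if_neg (by omega), hend]

end TailSwap

section Crossings

def IsCrossing (D : Fin n → Fin n → ℕ) (x : ℕ) (y : ℤ) : Prop :=
  x < n ∧ ∃ i i', i ≠ i' ∧ OnPath i (D i) x y ∧ OnPath i' (D i') x y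

instance (D : Fin n → Fin n → ℕ) (x : ℕ) (y : ℤ) : Decidable (IsCrossing D x y) :=
  inferInstanceAs (Decidable (_ ∧ _))

lemma height_le_sum (i : Fin n) (D : Fin n → Fin n → ℕ) (m : ℕ) :
    height i (D i) m ≤ ∑ k, ∑ j, D k j := by
  have hrow : ∑ j, D i j ≤ ∑ k, ∑ j, D k j :=
    single_le_sum (f := fun k => ∑ j, D k j) (fun k _ => Nat.zero_le _) (mem_univ i)
  have := (partialSum_le_sum (D i) m).trans hrow
  rw [height]
  omega

/-- The crossings of `D`, inside a box that contains all of them. -/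
noncomputable def crossings (D : Fin n → Fin n → ℕ) : Finset (ℕ ×ₗ ℤ) :=
  ((range n ×ˢ Icc (-(n : ℤ)) (∑ k, ∑ j, D k j : ℕ)).map toLex.toEmbedding).filter
    fun p => IsCrossing D (ofLex p).1 (ofLex p).2

lemma mem_crossings {D : Fin n → Fin n → ℕ} {p : ℕ ×ₗ ℤ} :
    p ∈ crossings D ↔ IsCrossing D (ofLex p).1 (ofLex p).2 := by
  refine ⟨fun hp => (mem_filter.1 hp).2, fun hp => mem_filter.2 ⟨?_, hp⟩⟩
  obtain ⟨hx, i, -, -, hi, -⟩ := hp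
  have h1 := (height_mono i (D i) (Nat.zero_le _)).trans hi.1
  have h2 := hi.2.trans (height_le_sum i D _)
  rw [height_zero] at h1
  simp only [mem_map_equiv, toLex_symm_eq, mem_product, mem_range, mem_Icc]
  exact ⟨hx, by omega, h2⟩

variable (D : Fin n → Fin n → ℕ) (h : (crossings D).Nonempty)

noncomputable def firstCrossing : ℕ ×ₗ ℤ := (crossings D).min' h

def pathsThrough (p : ℕ ×ₗ ℤ) : Finset (Fin n) :=
  univ.filter fun k => OnPath k (D k) (ofLex p).1 (ofLex p).2

lemma isCrossing_firstCrossing :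
    IsCrossing D (ofLex (firstCrossing D h)).1 (ofLex (firstCrossing D h)).2 :=
  mem_crossings.1 (min'_mem _ h)

lemma one_lt_card_pathsThrough : 1 < #(pathsThrough D (firstCrossing D h)) := by
  obtain ⟨-, i, i', hne, hi, hi'⟩ := isCrossing_firstCrossing D h
  exact one_lt_card.2 ⟨i, by simpa [pathsThrough], i', by simpa [pathsThrough], hne⟩

/-- The two lowest-indexed paths through the first crossing. -/
noncomputable def firstPath : Fin n :=
  (pathsThrough D (firstCrossing D h)).min' (card_pos.1 (one_lt_card_pathsThrough D h).le)

lemma firstPath_mem : firstPath D h ∈ pathsThrough D (firstCrossing D h) := min'_mem _ _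

noncomputable def secondPath : Fin n :=
  ((pathsThrough D (firstCrossing D h)).erase (firstPath D h)).min' <| by
    rw [← card_pos, card_erase_of_mem (firstPath_mem D h)]
    have := one_lt_card_pathsThrough D h
    omega

lemma secondPath_mem :
    secondPath D h ∈ (pathsThrough D (firstCrossing D h)).erase (firstPath D h) :=
  min'_mem _ _

lemma firstPath_ne_secondPath : firstPath D h ≠ secondPath D h :=
  (ne_of_mem_erase (secondPath_mem D h)).symm

lemma onPath_firstPath :
    OnPath (firstPath D h) (D (firstPath D h)) (ofLex (firstCrossing D h)).1
      (ofLex (firstCrossing D h)).2 :=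
  (mem_filter.1 (firstPath_mem D h)).2

lemma onPath_secondPath :
    OnPath (secondPath D h) (D (secondPath D h)) (ofLex (firstCrossing D h)).1
      (ofLex (firstCrossing D h)).2 :=
  (mem_filter.1 (mem_of_mem_erase (secondPath_mem D h))).2

/-- Nothing changes lexicographically before the first crossing, so `switch` keeps the first
crossing and the paths through it: it is an involution. -/
noncomputable def switch : Fin n → Fin n → ℕ :=
  tailSwap D (firstPath D h) (secondPath D h) (ofLex (firstCrossing D h)).1

lemma height_le_height_swap_firstCrossing (k : Fin n) :
    height k (D k) (ofLex (firstCrossing D h)).1 ≤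
      height (swap (firstPath D h) (secondPath D h) k)
        (D (swap (firstPath D h) (secondPath D h) k)) ((ofLex (firstCrossing D h)).1 + 1) :=
  height_le_height_swap (onPath_firstPath D h) (onPath_secondPath D h) k

lemma onPath_switch_iff (k : Fin n) {q : ℕ ×ₗ ℤ} (hq : q ≤ firstCrossing D h) :
    OnPath k (switch D h k) (ofLex q).1 (ofLex q).2 ↔ OnPath k (D k) (ofLex q).1 (ofLex q).2 :=
  onPath_tailSwap_iff (isCrossing_firstCrossing D h).1 (onPath_firstPath D h)
    (onPath_secondPath D h) k (Prod.Lex.le_iff.1 hq)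

lemma mem_crossings_switch_iff {q : ℕ ×ₗ ℤ} (hq : q ≤ firstCrossing D h) :
    q ∈ crossings (switch D h) ↔ q ∈ crossings D := by
  simp only [mem_crossings, IsCrossing, onPath_switch_iff D h _ hq]

lemma switch_nonempty : (crossings (switch D h)).Nonempty :=
  ⟨_, (mem_crossings_switch_iff D h le_rfl).2 (min'_mem _ h)⟩

variable {D h}

lemma firstCrossing_switch (h' : (crossings (switch D h)).Nonempty) :
    firstCrossing (switch D h) h' = firstCrossing D h := by
  refine le_antisymm (min'_le _ _ ((mem_crossings_switch_iff D h le_rfl).2 (min'_mem _ h)))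
    (le_min' _ _ _ fun q hq => ?_)
  by_contra! hlt
  exact (min'_le _ _ ((mem_crossings_switch_iff D h hlt.le).1 hq)).not_gt hlt

lemma pathsThrough_switch (h' : (crossings (switch D h)).Nonempty) :
    pathsThrough (switch D h) (firstCrossing (switch D h) h') =
      pathsThrough D (firstCrossing D h) := by
  ext k
  simp only [pathsThrough, mem_filter, mem_univ, true_and, firstCrossing_switch h',
    onPath_switch_iff D h k le_rfl]

lemma firstPath_switch (h' : (crossings (switch D h)).Nonempty) :
    firstPath (switch D h) h' = firstPath D h := by
  simp only [firstPath, pathsThrough_switch h']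

lemma secondPath_switch (h' : (crossings (switch D h)).Nonempty) :
    secondPath (switch D h) h' = secondPath D h := by
  simp only [secondPath, pathsThrough_switch h', firstPath_switch h']

lemma switch_switch (h' : (crossings (switch D h)).Nonempty) : switch (switch D h) h' = D := by
  rw [switch, firstPath_switch, secondPath_switch, firstCrossing_switch]
  exact tailSwap_tailSwap (isCrossing_firstCrossing D h).1
    (height_le_height_swap_firstCrossing D h)

end Crossings

section Involution

noncomputable def lgvInvolution (c : Σ _ : Perm (Fin n), Fin n → Fin n → ℕ) :
    Σ _ : Perm (Fin n), Fin n → Fin n → ℕ :=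
  if h : (crossings c.2).Nonempty then
    ⟨c.1 * swap (firstPath c.2 h) (secondPath c.2 h), switch c.2 h⟩
  else c

variable {σ : Perm (Fin n)} {D : Fin n → Fin n → ℕ}

lemma lgvInvolution_of_nonempty (h : (crossings D).Nonempty) :
    lgvInvolution ⟨σ, D⟩ = ⟨σ * swap (firstPath D h) (secondPath D h), switch D h⟩ :=
  dif_pos h

lemma lgvInvolution_lgvInvolution (h : (crossings D).Nonempty) :
    lgvInvolution (lgvInvolution ⟨σ, D⟩) = ⟨σ, D⟩ := by
  rw [lgvInvolution_of_nonempty h, lgvInvolution_of_nonempty (switch_nonempty D h),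
    firstPath_switch, secondPath_switch, switch_switch, mul_assoc, swap_mul_self, mul_one]

lemma lgvInvolution_mem_families {μ : Fin n → ℕ} (hc : ⟨σ, D⟩ ∈ families μ)
    (h : (crossings D).Nonempty) : lgvInvolution ⟨σ, D⟩ ∈ families μ := by
  rw [lgvInvolution_of_nonempty h]
  exact mk_mul_swap_tailSwap_mem_families (isCrossing_firstCrossing D h).1
    (height_le_height_swap_firstCrossing D h) hc

lemma lgvInvolution_ne (h : (crossings D).Nonempty) : lgvInvolution ⟨σ, D⟩ ≠ ⟨σ, D⟩ := by
  rw [lgvInvolution_of_nonempty h]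
  intro heq
  have : swap (firstPath D h) (secondPath D h) = 1 :=
    mul_eq_left.1 (congrArg Sigma.fst heq)
  exact firstPath_ne_secondPath D h (swap_eq_one_iff.1 this)

lemma sign_mul_weight_lgvInvolution {R : Type*} [CommRing R] (x : Fin n → R)
    (h : (crossings D).Nonempty) :
    (Perm.sign (lgvInvolution ⟨σ, D⟩).1 : R) * weight x (lgvInvolution ⟨σ, D⟩).2 =
      -((Perm.sign σ : R) * weight x D) := by
  rw [lgvInvolution_of_nonempty h, switch, weight_tailSwap (isCrossing_firstCrossing D h).1
    (height_le_height_swap_firstCrossing D h), Perm.sign_mul,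
    Perm.sign_swap (firstPath_ne_secondPath D h)]
  push_cast
  ring

lemma sum_families_crossing_eq_zero {R : Type*} [CommRing R] (μ : Fin n → ℕ) (x : Fin n → R) :
    ∑ c ∈ (families μ).filter (fun c => (crossings c.2).Nonempty),
      (Perm.sign c.1 : R) * weight x c.2 = 0 := by
  refine sum_involution (fun c _ => lgvInvolution c) ?_ ?_ ?_ ?_
  · rintro ⟨σ, D⟩ hc
    rw [sign_mul_weight_lgvInvolution x (mem_filter.1 hc).2, add_neg_cancel]
  · rintro ⟨σ, D⟩ hc -
    exact lgvInvolution_ne (mem_filter.1 hc).2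
  · rintro ⟨σ, D⟩ hc
    obtain ⟨hc, h⟩ := mem_filter.1 hc
    refine mem_filter.2 ⟨lgvInvolution_mem_families hc h, ?_⟩
    rw [lgvInvolution_of_nonempty h]
    exact switch_nonempty D h
  · rintro ⟨σ, D⟩ hc
    exact lgvInvolution_lgvInvolution (mem_filter.1 hc).2

end Involution

section NonCrossing

/-- Read as the contents of the rows of a tableau, this is column-strictness; for the paths it
says that path `i'` stays at least `i' - i` units below path `i`. -/
def IsColumnStrict (D : Fin n → Fin n → ℕ) : Prop :=
  ∀ i i' : Fin n, i < i' → ∀ u < n, partialSum (D i') (u + 1) ≤ partialSum (D i) u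

variable {D : Fin n → Fin n → ℕ}

lemma height_succ_lt_of_not_onPath {i i' : Fin n} {u : ℕ}
    (hdisj : ∀ v, ¬(OnPath i (D i) u v ∧ OnPath i' (D i') u v))
    (hle : height i' (D i') u ≤ height i (D i) (u + 1)) :
    height i' (D i') (u + 1) < height i (D i) u := by
  by_contra! hge
  refine hdisj (max (height i (D i) u) (height i' (D i') u))
    ⟨⟨le_max_left _ _, max_le (height_mono _ _ u.le_succ) hle⟩,
      ⟨le_max_right _ _, max_le hge (height_mono _ _ u.le_succ)⟩⟩

lemma height_succ_lt_of_crossings_eq_empty (h : crossings D = ∅) {i i' : Fin n} (hii' : i < i')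
    {u : ℕ} (hu : u < n) : height i' (D i') (u + 1) < height i (D i) u := by
  have hdisj : ∀ u < n, ∀ v, ¬(OnPath i (D i) u v ∧ OnPath i' (D i') u v) :=
    fun u hu v hv => (eq_empty_iff_forall_notMem.1 h) (toLex (u, v))
      (mem_crossings.2 ⟨hu, i, i', hii'.ne, hv⟩)
  suffices ∀ u ≤ n, height i' (D i') u < height i (D i) u by
    exact height_succ_lt_of_not_onPath (hdisj u hu)
      ((this u hu.le).le.trans (height_mono _ _ u.le_succ))
  intro u hu
  induction u with
  | zero =>
    simp only [height_zero, neg_lt_neg_iff, Nat.cast_lt]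
    exact hii'
  | succ u ih =>
    have := height_succ_lt_of_not_onPath (hdisj u (by omega))
      ((ih (by omega)).le.trans (height_mono _ _ u.le_succ))
    exact this.trans_le (height_mono _ _ u.le_succ)

lemma isColumnStrict_of_crossings_eq_empty (h : crossings D = ∅) : IsColumnStrict D := by
  intro i ⟨i', hi'⟩ hii' u hu
  replace hii' : (i : ℕ) + 1 ≤ i' := hii'
  induction i', hii' using Nat.le_induction with
  | base =>
    have := height_succ_lt_of_crossings_eq_empty h (i' := ⟨i + 1, hi'⟩)
      (Fin.lt_def.2 (Nat.lt_succ_self _)) hu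
    simp only [height] at this
    omega
  | succ m him ih =>
    have := height_succ_lt_of_crossings_eq_empty h (i := ⟨m, by omega⟩) (i' := ⟨m + 1, hi'⟩)
      (Fin.lt_def.2 (Nat.lt_succ_self _)) hu
    have := partialSum_mono (D ⟨m, by omega⟩) (Nat.le_add_right u 1)
    have := ih (by omega)
    simp only [height] at *
    omega

lemma crossings_eq_empty_of_isColumnStrict (h : IsColumnStrict D) : crossings D = ∅ := by
  refine eq_empty_iff_forall_notMem.2 fun p hp => ?_
  obtain ⟨hx, i, i', hne, hi, hi'⟩ := mem_crossings.1 hp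
  have key : ∀ {i i' : Fin n}, i < i' → OnPath i (D i) (ofLex p).1 (ofLex p).2 →
      ¬OnPath i' (D i') (ofLex p).1 (ofLex p).2 := by
    intro i i' hii' hi hi'
    have := h i i' hii' _ hx
    have := hi.1.trans hi'.2
    simp only [height] at *
    omega
  rcases hne.lt_or_gt with hlt | hlt
  · exact key hlt hi hi'
  · exact key hlt hi' hi

lemma perm_eq_one_of_isColumnStrict {μ : Fin n → ℕ} (hμ : Antitone μ) {σ : Perm (Fin n)}
    (hc : ⟨σ, D⟩ ∈ families μ) (h : IsColumnStrict D) : σ = 1 := by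
  have hend : ∀ k, (partialSum (D k) n : ℤ) - k = μ (σ k) - σ k := mem_families.1 hc
  -- An inversion `i < i'`, `σ i' < σ i` would make path `i'` end above path `i`.
  have hmono : Monotone σ := monotone_iff_forall_lt.2 fun i i' hii' => by
    by_contra! hinv
    have h1 := h i i' hii' (n - 1) (by omega)
    rw [Nat.sub_add_cancel (by omega)] at h1
    have h2 := partialSum_mono (D i) (Nat.sub_le n 1)
    have h3 := hμ hinv.le
    have := hend i
    have := hend i'
    have : (i : ℕ) < i' := hii'
    have : (σ i' : ℕ) < σ i := hinv
    omega
  ext i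
  rw [(hmono.strictMono_of_injective σ.injective).apply_eq]
  rfl

lemma mk_one_mem_families_iff {μ : Fin n → ℕ} :
    ⟨1, D⟩ ∈ families μ ↔ ∀ i, partialSum (D i) n = μ i := by
  simp only [mem_families, height, endpoint, Perm.one_apply, sub_left_inj, Nat.cast_inj]

end NonCrossing

section Words

def rowContent (m : ℕ) (w : Fin n → Fin n) (j : Fin n) : ℕ :=
  #{c : Fin n | (c : ℕ) < m ∧ w c = j}

variable {m : ℕ} {w : Fin n → Fin n}

lemma partialSum_rowContent (u : ℕ) :
    partialSum (rowContent m w) u = #{c : Fin n | (c : ℕ) < m ∧ (w c : ℕ) < u} := by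
  induction u with
  | zero => simp [partialSum_zero]
  | succ u ih =>
    rw [partialSum_succ, ih, extendByZero]
    split_ifs with hu
    · rw [rowContent, ← card_union_of_disjoint (disjoint_filter.2 fun c _ h1 h2 => by
        rw [h2.2] at h1; exact h1.2.ne rfl)]
      congr 1
      ext c
      simp only [mem_union, mem_filter, mem_univ, true_and, Fin.ext_iff]
      omega
    · simp only [add_zero]
      congr 1
      ext c
      have := (w c).2
      simp only [mem_filter, mem_univ, true_and]
      omega

lemma partialSum_rowContent_of_le (hm : m ≤ n) : partialSum (rowContent m w) n = m := by
  rw [partialSum_rowContent]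
  simp only [Fin.is_lt, and_true, Fin.card_filter_val_lt, min_eq_right hm]

lemma lt_partialSum_rowContent_iff (hw : ∀ c c' : Fin n, c ≤ c' → (c' : ℕ) < m → w c ≤ w c')
    (c : Fin n) (u : ℕ) :
    (c : ℕ) < partialSum (rowContent m w) u ↔ (c : ℕ) < m ∧ (w c : ℕ) < u := by
  rw [partialSum_rowContent, ← Fin.mem_iff_lt_card_of_isLowerSet, mem_filter,
    and_iff_right (mem_univ c)]
  intro a b hba ha
  simp only [coe_filter, mem_univ, true_and, Set.mem_ofPred_eq] at ha ⊢
  exact ⟨lt_of_le_of_lt hba ha.1, lt_of_le_of_lt (hw b a hba ha.1) ha.2⟩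

/-- The weakly increasing word in which each letter `j` occurs `d j` times, padded with `0`. -/
def word (d : Fin n → ℕ) (c : Fin n) : Fin n :=
  if h : ∃ u, u < n ∧ (c : ℕ) < partialSum d (u + 1) then ⟨Nat.find h, (Nat.find_spec h).1⟩
  else ⟨0, c.pos⟩

variable {d : Fin n → ℕ} {c : Fin n}

lemma word_lt_iff (hc : (c : ℕ) < partialSum d n) (u : ℕ) :
    (word d c : ℕ) < u ↔ (c : ℕ) < partialSum d u := by
  have h : ∃ u, u < n ∧ (c : ℕ) < partialSum d (u + 1) :=
    ⟨n - 1, by omega, by rwa [Nat.sub_add_cancel c.pos]⟩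
  rw [word, dif_pos h, Fin.val_mk, Nat.find_lt_iff]
  constructor
  · rintro ⟨v, hvu, -, hv⟩
    exact hv.trans_le (partialSum_mono d hvu)
  · intro hcu
    have hu : u ≠ 0 := by rintro rfl; simp [partialSum_zero] at hcu
    refine ⟨min (u - 1) (n - 1), by omega, by omega, ?_⟩
    rcases le_total u n with hun | hnu
    · rwa [min_eq_left (by omega), Nat.sub_add_cancel (by omega)]
    · rwa [min_eq_right (by omega), Nat.sub_add_cancel c.pos]

lemma word_eq_zero (hc : partialSum d n ≤ c) : (word d c : ℕ) = 0 := by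
  rw [word, dif_neg]
  rintro ⟨u, hu, hcu⟩
  exact (hcu.trans_le (partialSum_mono d hu)).not_ge hc

lemma word_mono {c' : Fin n} (hcc' : c ≤ c') (hc' : (c' : ℕ) < partialSum d n) :
    word d c ≤ word d c' := by
  have hc : (c : ℕ) < partialSum d n := lt_of_le_of_lt hcc' hc'
  rw [Fin.le_def, ← Nat.lt_succ_iff, word_lt_iff hc]
  exact lt_of_le_of_lt hcc' ((word_lt_iff hc' _).1 (Nat.lt_succ_self _))

lemma rowContent_word (hd : partialSum d n ≤ n) : rowContent (partialSum d n) (word d) = d := by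
  refine eq_of_partialSum_eq fun u hu => ?_
  rw [partialSum_rowContent]
  have : ∀ c : Fin n, (c : ℕ) < partialSum d n ∧ (word d c : ℕ) < u ↔ (c : ℕ) < partialSum d u :=
    fun c => ⟨fun h => (word_lt_iff h.1 u).1 h.2,
      fun h => have hc := h.trans_le (partialSum_mono d hu); ⟨hc, (word_lt_iff hc u).2 h⟩⟩
  simp only [this, Fin.card_filter_val_lt]
  exact min_eq_right ((partialSum_mono d hu).trans hd)

lemma word_rowContent (hm : m ≤ n) (hw : ∀ c c' : Fin n, c ≤ c' → (c' : ℕ) < m → w c ≤ w c')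
    (hw0 : ∀ c : Fin n, m ≤ c → (w c : ℕ) = 0) : word (rowContent m w) = w := by
  funext c
  rcases lt_or_ge (c : ℕ) m with hc | hc
  · have hc' : (c : ℕ) < partialSum (rowContent m w) n := by
      rwa [partialSum_rowContent_of_le hm]
    refine Fin.ext (eq_of_forall_gt_iff fun u => ?_)
    rw [word_lt_iff hc', lt_partialSum_rowContent_iff hw, and_iff_right hc]
  · rw [Fin.ext_iff, hw0 c hc]
    exact word_eq_zero (by rwa [partialSum_rowContent_of_le hm])

lemma prod_pow_rowContent {R : Type*} [CommMonoid R] (x : Fin n → R) :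
    ∏ j, x j ^ rowContent m w j = ∏ c : Fin n, if (c : ℕ) < m then x (w c) else 1 := by
  rw [← prod_filter, ← prod_fiberwise {c : Fin n | (c : ℕ) < m} w]
  refine prod_congr rfl fun j _ => ?_
  rw [filter_filter, rowContent, ← prod_const]
  exact prod_congr rfl fun c hc => by rw [(mem_filter.1 hc).2.2]

end Words

section Tableaux

def ssyt (μ : Fin n → ℕ) : Finset (Fin n → Fin n → Fin n) :=
  univ.filter fun T =>
    (∀ i j k : Fin n, j ≤ k → (k : ℕ) < μ i → T i j ≤ T i k) ∧
    (∀ i i' j : Fin n, i < i' → (j : ℕ) < μ i' → T i j < T i' j) ∧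
    (∀ i j : Fin n, μ i ≤ (j : ℕ) → (T i j : ℕ) = 0)

variable {μ : Fin n → ℕ}

lemma word_mem_ssyt (hμ : Antitone μ) {D : Fin n → Fin n → ℕ}
    (hD : ∀ i, partialSum (D i) n = μ i) (hcs : IsColumnStrict D) :
    (fun i => word (D i)) ∈ ssyt μ := by
  refine mem_filter.2 ⟨mem_univ _, fun i j k hjk hk => word_mono hjk (by rwa [hD]),
    fun i i' c hii' hc => ?_, fun i j hj => word_eq_zero (by rwa [hD])⟩
  have hci : (c : ℕ) < partialSum (D i) n := by rw [hD]; exact hc.trans_le (hμ hii'.le)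
  have hci' : (c : ℕ) < partialSum (D i') n := by rwa [hD]
  have hlow : partialSum (D i) (word (D i) c) ≤ c :=
    not_lt.1 fun h => lt_irrefl _ ((word_lt_iff hci _).2 h)
  rw [Fin.lt_def, ← not_le, ← Nat.lt_succ_iff, word_lt_iff hci', not_lt]
  exact (hcs i i' hii' _ (word (D i) c).2).trans hlow

lemma isColumnStrict_rowContent (hμ : Antitone μ) {T : Fin n → Fin n → Fin n}
    (hT : ∀ i i' j : Fin n, i < i' → (j : ℕ) < μ i' → T i j < T i' j) :
    IsColumnStrict fun i => rowContent (μ i) (T i) := by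
  intro i i' hii' u _
  simp only [partialSum_rowContent]
  refine card_le_card fun c hc => ?_
  simp only [mem_filter, mem_univ, true_and] at hc ⊢
  have := Fin.lt_def.1 (hT i i' c hii' hc.1)
  exact ⟨hc.1.trans_le (hμ hii'.le), by omega⟩

lemma mem_families_not_crossing_iff (hμ : Antitone μ)
    {c : Σ _ : Perm (Fin n), Fin n → Fin n → ℕ} :
    c ∈ (families μ).filter (fun c => ¬(crossings c.2).Nonempty) ↔
      c.1 = 1 ∧ (∀ i, partialSum (c.2 i) n = μ i) ∧ IsColumnStrict c.2 := by
  obtain ⟨σ, D⟩ := c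
  simp only [mem_filter, not_nonempty_iff_eq_empty]
  constructor
  · rintro ⟨hc, h⟩
    have hσ := perm_eq_one_of_isColumnStrict hμ hc (isColumnStrict_of_crossings_eq_empty h)
    subst hσ
    exact ⟨rfl, mk_one_mem_families_iff.1 hc, isColumnStrict_of_crossings_eq_empty h⟩
  · rintro ⟨rfl, hD, hcs⟩
    exact ⟨mk_one_mem_families_iff.2 hD, crossings_eq_empty_of_isColumnStrict hcs⟩

lemma sum_families_not_crossing {R : Type*} [CommRing R] (hμ : Antitone μ)
    (hμn : ∀ i, μ i ≤ n) (x : Fin n → R) :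
    ∑ c ∈ (families μ).filter (fun c => ¬(crossings c.2).Nonempty),
      (Perm.sign c.1 : R) * weight x c.2 =
    ∑ T ∈ ssyt μ, ∏ i, ∏ j : Fin n, if (j : ℕ) < μ i then x (T i j) else 1 := by
  refine sum_nbij' (fun c i => word (c.2 i)) (fun T => ⟨1, fun i => rowContent (μ i) (T i)⟩)
    ?_ ?_ ?_ ?_ ?_
  · intro c hc
    obtain ⟨-, hD, hcs⟩ := (mem_families_not_crossing_iff hμ).1 hc
    exact word_mem_ssyt hμ hD hcs
  · intro T hT
    obtain ⟨-, -, hT, -⟩ := mem_filter.1 hT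
    exact (mem_families_not_crossing_iff hμ).2
      ⟨rfl, fun i => partialSum_rowContent_of_le (hμn i), isColumnStrict_rowContent hμ hT⟩
  · rintro ⟨σ, D⟩ hc
    obtain ⟨rfl, hD, -⟩ := (mem_families_not_crossing_iff hμ).1 hc
    congr
    funext i
    conv_lhs => rw [← hD i]
    exact rowContent_word ((hD i).trans_le (hμn i))
  · intro T hT
    obtain ⟨-, hrow, -, hzero⟩ := mem_filter.1 hT
    funext i
    exact word_rowContent (hμn i) (hrow i) (hzero i)
  · intro c hc
    obtain ⟨hσ, hD, -⟩ := (mem_families_not_crossing_iff hμ).1 hc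
    rw [hσ, Perm.sign_one, Units.val_one, Int.cast_one, one_mul, weight]
    refine prod_congr rfl fun i _ => ?_
    conv_lhs => rw [← rowContent_word ((hD i).trans_le (hμn i)), hD i]
    exact prod_pow_rowContent x

end Tableaux

end JacobiTrudi

/-- the Schur polynomial is the generating function of semistandard Young
tableaux: `s_μ(b_1,…,b_n) = Σ_{T SSYT of shape μ, entries in {1,…,n}} ∏_{cells c} b_{T(c)}`.
A tableau is encoded as `T : Fin n → Fin n → Fin n` (row, column, entry, `0`-based), with
entries weakly increasing along rows, strictly increasing down columns, and `0` outside
the shape. -/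
theorem schur_eq_tableau_sum (n : ℕ) (μ : Fin n → ℕ) (hμ : Antitone μ)
    (hμ1 : ∀ i, μ i ≤ n) (b : Fin n → ℝ) :
    schur n μ b =
    ∑ T ∈ (Finset.univ : Finset (Fin n → Fin n → Fin n)).filter (fun T =>
        (∀ i j k : Fin n, j ≤ k → (k : ℕ) < μ i → T i j ≤ T i k) ∧
        (∀ i i' j : Fin n, i < i' → (j : ℕ) < μ i' → T i j < T i' j) ∧
        (∀ i j : Fin n, μ i ≤ (j : ℕ) → (T i j : ℕ) = 0)),
      ∏ i : Fin n, ∏ j : Fin n, if (j : ℕ) < μ i then b (T i j) else 1 := by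
  rw [JacobiTrudi.schur_eq_sum_families,
    ← sum_filter_add_sum_filter_not _ fun c => (JacobiTrudi.crossings c.2).Nonempty,
    JacobiTrudi.sum_families_crossing_eq_zero, zero_add]
  exact JacobiTrudi.sum_families_not_crossing hμ hμ1 b
end

section
/- The Lindström–Gessel–Viennot identity: for a directed acyclic graph with weights, sources u_1,…,u_l and sinks v_1,…,v_l such that any path from u_j to v_k and any path from u_{j'} to v_{k'} with j < j', k > k' must intersect, the total weight of families of l vertex-disjoint paths from u_j to v_j (j = 1,…,l) equals det[g(u_j, v_k)]_{j,k=1..l}, where g(u,v) is the total weight of all paths from u to v. -/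
open Finset

/-- The weight of a path (a list of vertices): the product of the weights of its edges. -/
def pathWeight {V : Type*} (w : V → V → ℝ) (p : List V) : ℝ :=
  ((p.zip p.tail).map (fun q => w q.1 q.2)).prod

/-- `p` is a directed path from `u` to `v` in the weighted digraph with edge set
`{(x,y) : w x y ≠ 0}`. -/
def IsPath {V : Type*} (w : V → V → ℝ) (u v : V) (p : List V) : Prop :=
  p.head? = some u ∧ p.getLast? = some v ∧ p.Chain' (fun x y => w x y ≠ 0)

/-- The total weight `g(u,v)` of all directed paths from `u` to `v`. -/
noncomputable def totalWeight {V : Type*} (w : V → V → ℝ) (u v : V) : ℝ :=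
  ∑' p : {p : List V // IsPath w u v p}, pathWeight w p.1

/-!
Expanding the determinant, `det [g(u_j, v_k)]` is the signed sum over pairs `(σ, F)` of a
permutation `σ` and a family of paths `F j : u_j → v_{σ j}`. On pairs in which two paths meet,
pick a shared vertex `x` and two paths `i ≠ j` through it and exchange their tails after `x`:
the weight is unchanged while `σ` is multiplied by the transposition `(i j)`, so the sign flips.
Choosing `x` from data the exchange preserves makes this an involution, and these pairs cancel.
In the surviving pairs the paths are vertex-disjoint, so by the crossing hypothesis `σ` has no
inversion and is the identity. Acyclicity makes every path a duplicate-free list, so all the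
sums involved are finite.
-/

open scoped Function

namespace List

variable {α : Type*} [DecidableEq α] {x : α} {p : List α}

theorem dropWhile_ne_eq_cons_tail (hx : x ∈ p) :
    p.dropWhile (· ≠ x) = x :: (p.dropWhile (· ≠ x)).tail := by
  have hne : p.dropWhile (· ≠ x) ≠ [] := fun h => by
    simpa using dropWhile_eq_nil_iff.mp h x hx
  obtain ⟨y, t, hyt⟩ := exists_cons_of_ne_nil hne
  have hy := head?_dropWhile_not (· ≠ x) p
  rw [hyt] at hy ⊢
  simp only [head?_cons, decide_eq_false_iff_not, not_not] at hy
  rw [hy, tail_cons]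

theorem takeWhile_ne_append_cons (hx : x ∈ p) :
    p.takeWhile (· ≠ x) ++ x :: (p.dropWhile (· ≠ x)).tail = p := by
  rw [← dropWhile_ne_eq_cons_tail hx, takeWhile_append_dropWhile]

end List

section Paths

variable {V : Type*} {w : V → V → ℝ}

theorem pathWeight_append_cons (w : V → V → ℝ) (a : List V) (x : V) (b : List V) :
    pathWeight w (a ++ x :: b) = pathWeight w (a ++ [x]) * pathWeight w (x :: b) := by
  induction a with
  | nil => simp [pathWeight]
  | cons c t ih =>
    cases t with
    | nil => simp [pathWeight]
    | cons d t' =>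
      simp only [List.cons_append] at ih ⊢
      simp only [pathWeight, List.tail_cons, List.zip_cons_cons, List.map_cons,
        List.prod_cons] at ih ⊢
      rw [ih, mul_assoc]

theorem pathWeight_append_cons_mul_swap (w : V → V → ℝ) (x : V) (a b c d : List V) :
    pathWeight w (a ++ x :: d) * pathWeight w (c ++ x :: b) =
      pathWeight w (a ++ x :: b) * pathWeight w (c ++ x :: d) := by
  rw [pathWeight_append_cons w a x d, pathWeight_append_cons w c x b,
    pathWeight_append_cons w a x b, pathWeight_append_cons w c x d]
  ring

theorem IsPath.nodup {h : V → ℕ} (hDAG : ∀ x y, w x y ≠ 0 → h x < h y) {u v : V} {p : List V}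
    (hp : IsPath w u v p) : p.Nodup := by
  have : p.Pairwise (fun x y => h x < h y) :=
    List.isChain_iff_pairwise.mp (hp.2.2.imp fun {a b} => hDAG a b)
  exact this.imp fun hlt heq => (heq ▸ hlt).false

theorem exists_finset_isPath [Fintype V] {h : V → ℕ} (hDAG : ∀ x y, w x y ≠ 0 → h x < h y)
    (u v : V) : ∃ s : Finset (List V), ∀ p, p ∈ s ↔ IsPath w u v p := by
  have hfin : {p | IsPath w u v p}.Finite :=
    (List.finite_length_le V (Fintype.card V)).subset fun _ hp => (hp.nodup hDAG).length_le_card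
  exact ⟨hfin.toFinset, fun p => hfin.mem_toFinset⟩

theorem IsPath.append_cons {u v u' v' x : V} {a b c d : List V}
    (h₁ : IsPath w u v (a ++ x :: b)) (h₂ : IsPath w u' v' (c ++ x :: d)) :
    IsPath w u v' (a ++ x :: d) := by
  obtain ⟨h₁h, -, h₁c⟩ := h₁
  obtain ⟨-, h₂l, h₂c⟩ := h₂
  rw [List.Chain', List.isChain_append] at h₁c h₂c
  refine ⟨?_, ?_, ?_⟩
  · cases a <;> simpa using h₁h
  · rwa [List.getLast?_append_cons] at h₂l ⊢
  · rw [List.Chain', List.isChain_append]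
    exact ⟨h₁c.1, h₂c.2.1, by simpa using h₁c.2.2⟩

end Paths

section Splice

variable {V : Type*} [DecidableEq V] {x : V} {p q : List V}

def spliceAt (x : V) (p q : List V) : List V :=
  p.takeWhile (· ≠ x) ++ q.dropWhile (· ≠ x)

theorem spliceAt_eq (hq : x ∈ q) :
    spliceAt x p q = p.takeWhile (· ≠ x) ++ x :: (q.dropWhile (· ≠ x)).tail := by
  rw [spliceAt, ← List.dropWhile_ne_eq_cons_tail hq]

theorem mem_spliceAt (hq : x ∈ q) : x ∈ spliceAt x p q := by
  simp [spliceAt_eq hq]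

theorem spliceAt_spliceAt (hq : x ∈ q) : spliceAt x (spliceAt x p q) (spliceAt x q p) = p := by
  have hpre : ∀ a ∈ p.takeWhile (· ≠ x), (a ≠ x : Bool) := fun _ => List.mem_takeWhile_imp
  have hpre' : ∀ a ∈ q.takeWhile (· ≠ x), (a ≠ x : Bool) := fun _ => List.mem_takeWhile_imp
  rw [spliceAt, spliceAt_eq hq, spliceAt, List.takeWhile_append_of_pos hpre,
    List.takeWhile_cons_of_neg (by simp), List.append_nil,
    List.dropWhile_append_of_pos hpre', List.dropWhile_idempotent, List.takeWhile_append_dropWhile]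

theorem coe_spliceAt_add_coe_spliceAt (x : V) (p q : List V) :
    (spliceAt x p q : Multiset V) + spliceAt x q p = p + q := by
  conv_rhs => rw [← List.takeWhile_append_dropWhile (l := p) (p := (· ≠ x)),
    ← List.takeWhile_append_dropWhile (l := q) (p := (· ≠ x))]
  simp only [spliceAt, ← Multiset.coe_add]
  abel

theorem pathWeight_spliceAt_mul (w : V → V → ℝ) (hp : x ∈ p) (hq : x ∈ q) :
    pathWeight w (spliceAt x p q) * pathWeight w (spliceAt x q p) =
      pathWeight w p * pathWeight w q := by
  conv_rhs => rw [← List.takeWhile_ne_append_cons hp, ← List.takeWhile_ne_append_cons hq]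
  rw [spliceAt_eq hq, spliceAt_eq hp, pathWeight_append_cons_mul_swap]

theorem IsPath.spliceAt {w : V → V → ℝ} {a b c d : V} (hp : IsPath w a b p) (hq : IsPath w c d q)
    (hxp : x ∈ p) (hxq : x ∈ q) : IsPath w a d (spliceAt x p q) := by
  rw [← List.takeWhile_ne_append_cons hxp] at hp
  rw [← List.takeWhile_ne_append_cons hxq] at hq
  rw [spliceAt_eq hxq]
  exact hp.append_cons hq

end Splice

noncomputable def pick {α : Type*} (P : α → Prop) : Option α :=
  open Classical in if h : ∃ a, P a then some h.choose else none

theorem pick_spec {α : Type*} {P : α → Prop} {a : α} (h : pick P = some a) : P a := by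
  unfold pick at h
  split_ifs at h with hP
  exact Option.some_injective _ h ▸ hP.choose_spec

theorem exists_pick_eq_some {α : Type*} {P : α → Prop} (h : ∃ a, P a) : ∃ a, pick P = some a :=
  ⟨_, dif_pos h⟩

section Collisions

variable {V ι : Type*} [DecidableEq V] [Fintype ι] {x : V} {i j : ι} {F : ι → List V}

/-- Depends on `F` only through the multiset of all its vertices, which a tail swap at the chosen
vertex leaves unchanged; this is what makes `tailSwap` an involution. -/
noncomputable def collisionVertex (F : ι → List V) : Option V :=
  pick fun x => 2 ≤ (∑ k, (F k : Multiset V)).count x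

noncomputable def collision (F : ι → List V) : Option (V × ι × ι) :=
  (collisionVertex F).bind fun x =>
    (pick fun ij : ι × ι => ij.1 ≠ ij.2 ∧ x ∈ F ij.1 ∧ x ∈ F ij.2).map (Prod.mk x)

theorem collision_eq_some_iff :
    collision F = some (x, i, j) ↔ collisionVertex F = some x ∧
      pick (fun ij : ι × ι => ij.1 ≠ ij.2 ∧ x ∈ F ij.1 ∧ x ∈ F ij.2) = some (i, j) := by
  simp [collision, Option.bind_eq_some_iff, Option.map_eq_some_iff]

theorem collision_spec (h : collision F = some (x, i, j)) : i ≠ j ∧ x ∈ F i ∧ x ∈ F j :=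
  pick_spec (a := (i, j)) (collision_eq_some_iff.mp h).2

theorem exists_collision (hF : ∀ k, (F k).Nodup)
    (hdisj : ¬ Pairwise (List.Disjoint on F)) :
    ∃ x i j, collision F = some (x, i, j) := by
  have hcount : ∀ y, (∑ k, (F k : Multiset V)).count y = #{k | y ∈ F k} := fun y => by
    simp [Multiset.count_sum', (hF _).count, sum_boole]
  obtain ⟨k, k', hkk', y, hy, hy'⟩ : ∃ k k', k ≠ k' ∧ ∃ y, y ∈ F k ∧ y ∈ F k' := by
    simpa [Pairwise, List.Disjoint] using hdisj
  obtain ⟨x, hx⟩ : ∃ x, collisionVertex F = some x := exists_pick_eq_some ⟨y, by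
    rw [hcount]; exact one_lt_card.mpr ⟨k, by simp [hy], k', by simp [hy'], hkk'⟩⟩
  have hx₂ : 2 ≤ #{k | x ∈ F k} := by
    rw [← hcount]
    exact pick_spec (a := x) hx
  obtain ⟨a, ha, b, hb, hab⟩ := one_lt_card.mp hx₂
  obtain ⟨⟨i, j⟩, hij⟩ := exists_pick_eq_some
    (P := fun ij : ι × ι => ij.1 ≠ ij.2 ∧ x ∈ F ij.1 ∧ x ∈ F ij.2)
    ⟨(a, b), hab, by simpa using ha, by simpa using hb⟩
  exact ⟨x, i, j, collision_eq_some_iff.mpr ⟨hx, hij⟩⟩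

end Collisions

section TailSwap

open Equiv

variable {V ι : Type*} [DecidableEq V] [DecidableEq ι] {x : V} {i j : ι} {F : ι → List V}

def swapTails (x : V) (i j : ι) (F : ι → List V) : ι → List V :=
  Function.update (Function.update F i (spliceAt x (F i) (F j))) j (spliceAt x (F j) (F i))

theorem swapTails_apply_left (hij : i ≠ j) : swapTails x i j F i = spliceAt x (F i) (F j) := by
  rw [swapTails, Function.update_of_ne hij, Function.update_self]

theorem swapTails_apply_right : swapTails x i j F j = spliceAt x (F j) (F i) :=
  Function.update_self ..

theorem swapTails_apply_of_ne {k : ι} (hki : k ≠ i) (hkj : k ≠ j) : swapTails x i j F k = F k := by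
  rw [swapTails, Function.update_of_ne hkj, Function.update_of_ne hki]

theorem swapTails_swapTails (hij : i ≠ j) (hi : x ∈ F i) (hj : x ∈ F j) :
    swapTails x i j (swapTails x i j F) = F := by
  funext k
  rcases eq_or_ne k i with rfl | hki
  · rw [swapTails_apply_left hij, swapTails_apply_left hij, swapTails_apply_right,
      spliceAt_spliceAt hj]
  rcases eq_or_ne k j with rfl | hkj
  · rw [swapTails_apply_right, swapTails_apply_left hij, swapTails_apply_right,
      spliceAt_spliceAt hi]
  · rw [swapTails_apply_of_ne hki hkj, swapTails_apply_of_ne hki hkj]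

theorem mem_swapTails_iff (hij : i ≠ j) (hi : x ∈ F i) (hj : x ∈ F j) (k : ι) :
    x ∈ swapTails x i j F k ↔ x ∈ F k := by
  rcases eq_or_ne k i with rfl | hki
  · simp [swapTails_apply_left hij, mem_spliceAt hj, hi]
  rcases eq_or_ne k j with rfl | hkj
  · simp [swapTails_apply_right, mem_spliceAt hi, hj]
  · rw [swapTails_apply_of_ne hki hkj]

@[to_additive]
theorem prod_swapTails [Fintype ι] {M : Type*} [CommMonoid M] (f : List V → M) (hij : i ≠ j)
    (hf : f (spliceAt x (F i) (F j)) * f (spliceAt x (F j) (F i)) = f (F i) * f (F j)) :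
    ∏ k, f (swapTails x i j F k) = ∏ k, f (F k) := by
  rw [← prod_mul_prod_compl {i, j}, ← prod_mul_prod_compl {i, j} (fun k => f (F k)),
    prod_pair hij, prod_pair hij, swapTails_apply_left hij, swapTails_apply_right, hf]
  congr 1
  refine prod_congr rfl fun k hk => ?_
  simp only [mem_compl, mem_insert, mem_singleton, not_or] at hk
  rw [swapTails_apply_of_ne hk.1 hk.2]

variable [Fintype ι]

theorem collision_swapTails (h : collision F = some (x, i, j)) :
    collision (swapTails x i j F) = some (x, i, j) := by
  obtain ⟨hij, hi, hj⟩ := collision_spec h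
  have hsum : ∑ k, (swapTails x i j F k : Multiset V) = ∑ k, (F k : Multiset V) :=
    sum_swapTails _ hij (coe_spliceAt_add_coe_spliceAt x _ _)
  simpa only [collision_eq_some_iff, collisionVertex, hsum, mem_swapTails_iff hij hi hj] using h

noncomputable def tailSwap (c : Σ _ : Perm ι, ι → List V) : Σ _ : Perm ι, ι → List V :=
  match collision c.2 with
  | some (x, i, j) => ⟨c.1 * swap i j, swapTails x i j c.2⟩
  | none => c

theorem tailSwap_of_collision {σ : Perm ι} (h : collision F = some (x, i, j)) :
    tailSwap ⟨σ, F⟩ = ⟨σ * swap i j, swapTails x i j F⟩ := by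
  simp [tailSwap, h]

theorem tailSwap_tailSwap {σ : Perm ι} (h : collision F = some (x, i, j)) :
    tailSwap (tailSwap ⟨σ, F⟩) = ⟨σ, F⟩ := by
  obtain ⟨hij, hi, hj⟩ := collision_spec h
  rw [tailSwap_of_collision h, tailSwap_of_collision (collision_swapTails h),
    swapTails_swapTails hij hi hj, mul_assoc, swap_mul_self, mul_one]

end TailSwap

theorem tsum_subtype_eq_sum {β α : Type*} [AddCommMonoid α] [TopologicalSpace α] {P : β → Prop}
    {s : Finset β} (hs : ∀ b, b ∈ s ↔ P b) (f : β → α) :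
    ∑' b : {b // P b}, f b = ∑ b ∈ s, f b := by
  obtain rfl : P = (· ∈ s) := funext fun b => propext (hs b).symm
  exact s.tsum_subtype f

open Equiv Equiv.Perm

theorem det_of_sum_eq_sum_sigma {ι α R : Type*} [Fintype ι] [DecidableEq ι] [CommRing R]
    (A : ι → ι → Finset α) (f : α → R) :
    (Matrix.of fun j k => ∑ p ∈ A j k, f p).det =
      ∑ c ∈ univ.sigma fun σ : Perm ι => Fintype.piFinset fun j => A j (σ j),
        sign c.1 • ∏ j, f (c.2 j) := by
  rw [← Matrix.det_transpose, Matrix.det_apply, sum_sigma]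
  refine sum_congr rfl fun σ _ => ?_
  simp only [Matrix.transpose_apply, Matrix.of_apply, prod_univ_sum, smul_sum]

section PathFamilies

variable {V ι : Type*} {w : V → V → ℝ} {u v : ι → V}

def IsPathFamily (w : V → V → ℝ) (u v : ι → V) (σ : Perm ι) (F : ι → List V) : Prop :=
  ∀ j, IsPath w (u j) (v (σ j)) (F j)

theorem IsPathFamily.swapTails [DecidableEq V] [DecidableEq ι] {σ : Perm ι} {F : ι → List V}
    {x : V} {i j : ι} (hF : IsPathFamily w u v σ F) (hij : i ≠ j) (hi : x ∈ F i) (hj : x ∈ F j) :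
    IsPathFamily w u v (σ * swap i j) (swapTails x i j F) := by
  intro k
  rcases eq_or_ne k i with rfl | hki
  · rw [swapTails_apply_left hij, Perm.mul_apply, swap_apply_left]
    exact (hF k).spliceAt (hF j) hi hj
  rcases eq_or_ne k j with rfl | hkj
  · rw [swapTails_apply_right, Perm.mul_apply, swap_apply_right]
    exact (hF k).spliceAt (hF i) hj hi
  · rw [swapTails_apply_of_ne hki hkj, Perm.mul_apply, swap_apply_of_ne_of_ne hki hkj]
    exact hF k

theorem sum_sign_smul_prod_pathWeight_eq_zero [DecidableEq V] [DecidableEq ι] [Fintype ι]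
    {h : V → ℕ} (hDAG : ∀ x y, w x y ≠ 0 → h x < h y) {s : Finset (Σ _ : Perm ι, ι → List V)}
    (hs : ∀ c, c ∈ s ↔
      IsPathFamily w u v c.1 c.2 ∧ ¬ Pairwise (List.Disjoint on c.2)) :
    ∑ c ∈ s, sign c.1 • ∏ k, pathWeight w (c.2 k) = 0 := by
  have hcol : ∀ c ∈ s, ∃ x i j, collision c.2 = some (x, i, j) := fun c hc =>
    exists_collision (fun k => (((hs c).1 hc).1 k).nodup hDAG) ((hs c).1 hc).2
  refine sum_involution (fun c _ => tailSwap c) ?_ ?_ ?_ ?_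
  · rintro ⟨σ, F⟩ hc
    obtain ⟨x, i, j, h⟩ := hcol _ hc
    obtain ⟨hij, hi, hj⟩ := collision_spec h
    rw [tailSwap_of_collision h, Perm.sign_mul, sign_swap hij, mul_neg_one, Units.neg_smul,
      prod_swapTails _ hij (pathWeight_spliceAt_mul w hi hj), add_neg_cancel]
  · rintro ⟨σ, F⟩ hc -
    obtain ⟨x, i, j, h⟩ := hcol _ hc
    rw [tailSwap_of_collision h]
    simp [(collision_spec h).1]
  · rintro ⟨σ, F⟩ hc
    obtain ⟨x, i, j, h⟩ := hcol _ hc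
    obtain ⟨hij, hi, hj⟩ := collision_spec h
    obtain ⟨hF, hdisj⟩ := (hs _).1 hc
    rw [tailSwap_of_collision h, hs]
    exact ⟨hF.swapTails hij hi hj, fun hdisj' =>
      hdisj' hij ((mem_swapTails_iff hij hi hj i).2 hi) ((mem_swapTails_iff hij hi hj j).2 hj)⟩
  · rintro ⟨σ, F⟩ hc
    obtain ⟨x, i, j, h⟩ := hcol _ hc
    exact tailSwap_tailSwap h

theorem IsPathFamily.eq_one_of_pairwise_disjoint [LinearOrder ι] [Finite ι] {σ : Perm ι}
    {F : ι → List V}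
    (hcross : ∀ j j' k k' : ι, j < j' → k' < k →
      ∀ p p' : List V, IsPath w (u j) (v k) p → IsPath w (u j') (v k') p' → ¬ p.Disjoint p')
    (hF : IsPathFamily w u v σ F) (hdisj : Pairwise (List.Disjoint on F)) :
    σ = 1 := by
  have hmono : StrictMono σ := fun a b hab => lt_of_not_ge fun hba =>
    hcross a b (σ a) (σ b) hab (lt_of_le_of_ne hba (σ.injective.ne hab.ne'))
      (F a) (F b) (hF a) (hF b) (hdisj hab.ne)
  exact Perm.ext fun a => hmono.apply_eq

theorem sum_sign_smul_prod_pathWeight_eq_sum [LinearOrder ι] [Fintype ι]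
    (hcross : ∀ j j' k k' : ι, j < j' → k' < k →
      ∀ p p' : List V, IsPath w (u j) (v k) p → IsPath w (u j') (v k') p' → ¬ p.Disjoint p')
    {s : Finset (Σ _ : Perm ι, ι → List V)} {t : Finset (ι → List V)}
    (hs : ∀ c, c ∈ s ↔
      IsPathFamily w u v c.1 c.2 ∧ Pairwise (List.Disjoint on c.2))
    (ht : ∀ F, F ∈ t ↔ IsPathFamily w u v 1 F ∧ Pairwise (List.Disjoint on F)) :
    ∑ c ∈ s, sign c.1 • ∏ k, pathWeight w (c.2 k) = ∑ F ∈ t, ∏ k, pathWeight w (F k) := by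
  have hone : ∀ c ∈ s, c.1 = 1 := fun c hc =>
    ((hs c).1 hc).1.eq_one_of_pairwise_disjoint hcross ((hs c).1 hc).2
  refine sum_nbij' Sigma.snd (fun F => ⟨1, F⟩) ?_ ?_ ?_ ?_ ?_
  · intro c hc
    rw [ht, ← hone c hc]
    exact (hs c).1 hc
  · intro F hF
    exact (hs _).2 ((ht F).1 hF)
  · rintro ⟨σ, F⟩ hc
    obtain rfl : σ = 1 := hone _ hc
    rfl
  · intro F _
    rfl
  · intro c hc
    simp only [hone c hc, Perm.sign_one, one_smul]

end PathFamilies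

theorem lindstrom_gessel_viennot_general {V : Type*} [Fintype V]
    (w : V → V → ℝ) (h : V → ℕ) (hDAG : ∀ x y, w x y ≠ 0 → h x < h y)
    (l : ℕ) (u v : Fin l → V)
    (hcross : ∀ j j' k k' : Fin l, j < j' → k' < k →
      ∀ p p' : List V, IsPath w (u j) (v k) p → IsPath w (u j') (v k') p' →
        ¬ p.Disjoint p') :
    (∑' F : {F : Fin l → List V //
        (∀ j, IsPath w (u j) (v j) (F j)) ∧
        ∀ j j', j ≠ j' → (F j).Disjoint (F j')},
      ∏ j, pathWeight w (F.1 j)) =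
    Matrix.det (Matrix.of fun j k : Fin l => totalWeight w (u j) (v k)) := by
  classical
  choose P hP using exists_finset_isPath hDAG
  have hB : ∀ c, c ∈ univ.sigma (fun σ : Perm (Fin l) =>
      Fintype.piFinset fun j => P (u j) (v (σ j))) ↔ IsPathFamily w u v c.1 c.2 := by
    simp [IsPathFamily, hP]
  have hdisj : ∀ F, F ∈ (Fintype.piFinset fun j => P (u j) (v j)).filter
      (fun F : Fin l → List V => Pairwise (List.Disjoint on F)) ↔
      (∀ j, IsPath w (u j) (v j) (F j)) ∧ ∀ j j', j ≠ j' → (F j).Disjoint (F j') := by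
    intro F
    simp only [mem_filter, Fintype.mem_piFinset, hP]
    rfl
  rw [tsum_subtype_eq_sum hdisj fun F => ∏ j, pathWeight w (F j)]
  simp only [totalWeight, tsum_subtype_eq_sum (hP _ _)]
  rw [det_of_sum_eq_sum_sigma, ← sum_filter_not_add_sum_filter _
      (fun c : Σ _ : Perm (Fin l), Fin l → List V => Pairwise (List.Disjoint on c.2)),
    sum_sign_smul_prod_pathWeight_eq_zero (u := u) (v := v) hDAG, zero_add,
    sum_sign_smul_prod_pathWeight_eq_sum (u := u) (v := v) hcross]
  · exact fun c => mem_filter.trans (and_congr_left' (hB c))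
  · exact hdisj
  · exact fun c => mem_filter.trans (and_congr_left' (hB c))

/-- Lindström–Gessel–Viennot: in a finite weighted directed acyclic graph
(acyclicity witnessed by a height function `h` increasing along edges), with sources
`u_1,…,u_l` and sinks `v_1,…,v_l` such that any path `u_j → v_k` and any path
`u_{j'} → v_{k'}` with `j < j'`, `k' < k` share a vertex, the total weight of families of
`l` pairwise vertex-disjoint paths `u_j → v_j` equals `det[g(u_j, v_k)]`. -/
theorem lindstrom_gessel_viennot {V : Type*} [Fintype V] [DecidableEq V]
    (w : V → V → ℝ) (h : V → ℕ) (hDAG : ∀ x y, w x y ≠ 0 → h x < h y)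
    (l : ℕ) (u v : Fin l → V)
    (hcross : ∀ j j' k k' : Fin l, j < j' → k' < k →
      ∀ p p' : List V, IsPath w (u j) (v k) p → IsPath w (u j') (v k') p' →
        ¬ p.Disjoint p') :
    (∑' F : {F : Fin l → List V //
        (∀ j, IsPath w (u j) (v j) (F j)) ∧
        ∀ j j', j ≠ j' → (F j).Disjoint (F j')},
      ∏ j, pathWeight w (F.1 j)) =
    Matrix.det (Matrix.of fun j k : Fin l => totalWeight w (u j) (v k)) :=
  lindstrom_gessel_viennot_general w h hDAG l u v hcross
end

section
/- Let λ be a partition. λ admits a tiling of its Young diagram by dominoes if and only if the number of cells (i,j) in the diagram with i+j even equals the number of cells with i+j odd. -/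
open Finset

/-- Two cells of `ℕ × ℕ` are adjacent if they share an edge. -/
def CellAdjacent (c d : ℕ × ℕ) : Prop :=
  (c.1 = d.1 ∧ (c.2 = d.2 + 1 ∨ d.2 = c.2 + 1)) ∨
  (c.2 = d.2 ∧ (c.1 = d.1 + 1 ∨ d.1 = c.1 + 1))

/-- A Young diagram admits a domino tiling: its cells can be partitioned into pairs of
adjacent cells, encoded as a fixed-point-free involution on the cells pairing each cell
with the other half of its domino. -/
def HasDominoTiling (lam : YoungDiagram) : Prop :=
  ∃ f : ℕ × ℕ → ℕ × ℕ, ∀ c ∈ lam.cells,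
    f c ∈ lam.cells ∧ f (f c) = c ∧ f c ≠ c ∧ CellAdjacent c (f c)

/-!
Colour cell `(i, j)` by the sign `(-1) ^ (i + j)`. Adjacent cells have opposite colours, so a
domino tiling forces the signed count to vanish. Conversely, a balanced diagram can be tiled by
induction on its size: unless it is a staircase `(n, n - 1, …, 1)`, some domino can be removed
from the end of one row or of two equal rows leaving a Young diagram, and removing it keeps the
diagram balanced; a nonempty staircase is never balanced, its `k`-th antidiagonal contributing
`(-1) ^ k (k + 1)`.
-/

def imbalance (s : Finset (ℕ × ℕ)) : ℤ :=
  ∑ c ∈ s, (-1) ^ (c.1 + c.2)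

theorem imbalance_eq_zero_iff (s : Finset (ℕ × ℕ)) :
    imbalance s = 0 ↔
      (s.filter (fun c => (c.1 + c.2) % 2 = 0)).card =
        (s.filter (fun c => (c.1 + c.2) % 2 = 1)).card := by
  have hodd : s.filter (fun c => ¬(c.1 + c.2) % 2 = 0) =
      s.filter (fun c => (c.1 + c.2) % 2 = 1) :=
    filter_congr fun _ _ => Nat.mod_two_ne_zero
  simp only [imbalance, neg_one_pow_eq_ite, Nat.even_iff, sum_ite, sum_const, hodd]
  simp only [nsmul_eq_mul, mul_one, mul_neg]
  omega

namespace CellAdjacent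

theorem symm {c d : ℕ × ℕ} (h : CellAdjacent c d) : CellAdjacent d c := by
  unfold CellAdjacent at *
  omega

theorem ne {c d : ℕ × ℕ} (h : CellAdjacent c d) : c ≠ d := by
  rintro rfl
  unfold CellAdjacent at h
  omega

theorem neg_one_pow_add_neg_one_pow {c d : ℕ × ℕ} (h : CellAdjacent c d) :
    (-1 : ℤ) ^ (c.1 + c.2) + (-1) ^ (d.1 + d.2) = 0 := by
  obtain ⟨c1, c2⟩ := c
  obtain ⟨d1, d2⟩ := d
  simp only [CellAdjacent] at h
  rcases h with ⟨rfl, rfl | rfl⟩ | ⟨rfl, rfl | rfl⟩ <;> ring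

end CellAdjacent

theorem imbalance_sdiff_pair {s : Finset (ℕ × ℕ)} {c d : ℕ × ℕ} (hc : c ∈ s) (hd : d ∈ s)
    (hcd : CellAdjacent c d) : imbalance (s \ {c, d}) = imbalance s := by
  have hsub : {c, d} ⊆ s := insert_subset hc (singleton_subset_iff.mpr hd)
  rw [imbalance, imbalance, ← sum_sdiff hsub, sum_pair hcd.ne,
    hcd.neg_one_pow_add_neg_one_pow, add_zero]

theorem HasDominoTiling.imbalance_eq_zero {μ : YoungDiagram} (h : HasDominoTiling μ) :
    imbalance μ.cells = 0 := by
  obtain ⟨f, hf⟩ := h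
  exact sum_involution (fun c _ => f c) (fun c hc => (hf c hc).2.2.2.neg_one_pow_add_neg_one_pow)
    (fun c hc _ => (hf c hc).2.2.1) (fun c hc => (hf c hc).1) (fun c hc => (hf c hc).2.1)

theorem HasDominoTiling.of_cells_eq_sdiff {μ ν : YoungDiagram} {c d : ℕ × ℕ}
    (hc : c ∈ μ.cells) (hd : d ∈ μ.cells) (hcd : CellAdjacent c d)
    (hν : ν.cells = μ.cells \ {c, d}) (h : HasDominoTiling ν) : HasDominoTiling μ := by
  obtain ⟨g, hg⟩ := h
  have mem_ν : ∀ {x}, x ∈ ν.cells ↔ x ∈ μ.cells ∧ x ≠ c ∧ x ≠ d := by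
    simp [hν]
  refine ⟨fun x => if x = c then d else if x = d then c else g x, fun x hx => ?_⟩
  by_cases hxc : x = c
  · rw [hxc]
    simp [hcd.ne.symm, hd, hcd]
  by_cases hxd : x = d
  · rw [hxd]
    simp [hcd.ne, hcd.ne.symm, hc, hcd.symm]
  obtain ⟨hgx, hggx, hgx_ne, hadj⟩ := hg x (mem_ν.mpr ⟨hx, hxc, hxd⟩)
  obtain ⟨hgx_μ, hgxc, hgxd⟩ := mem_ν.mp hgx
  simp [hxc, hxd, hgxc, hgxd, hgx_μ, hggx, hgx_ne, hadj]

def staircase (n : ℕ) : Finset (ℕ × ℕ) :=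
  (range n).biUnion antidiagonal

theorem mem_staircase {n : ℕ} {c : ℕ × ℕ} : c ∈ staircase n ↔ c.1 + c.2 < n := by
  simp [staircase]

theorem imbalance_staircase_succ (n : ℕ) :
    imbalance (staircase (n + 1)) = imbalance (staircase n) + (-1) ^ n * (n + 1) := by
  have hdisj : Disjoint (staircase n) (antidiagonal n) :=
    disjoint_left.mpr fun c hc hc' => by
      rw [mem_staircase] at hc
      rw [HasAntidiagonal.mem_antidiagonal] at hc'
      omega
  have hunion : staircase (n + 1) = staircase n ∪ antidiagonal n := by
    ext c
    simp only [mem_union, mem_staircase, HasAntidiagonal.mem_antidiagonal]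
    omega
  rw [hunion, imbalance, sum_union hdisj, ← imbalance,
    sum_congr rfl fun c hc => by rw [HasAntidiagonal.mem_antidiagonal.mp hc], sum_const,
    Nat.card_antidiagonal, nsmul_eq_mul]
  push_cast
  ring

theorem imbalance_staircase_ne_zero {n : ℕ} (hn : n ≠ 0) : imbalance (staircase n) ≠ 0 := by
  have closed_form : ∀ m : ℕ, imbalance (staircase (2 * m)) = -m ∧
      imbalance (staircase (2 * m + 1)) = m + 1 := by
    intro m
    induction m with
    | zero => simp [staircase, imbalance]
    | succ m ih =>
      have heven : imbalance (staircase (2 * (m + 1))) = -(m + 1 : ℕ) := by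
        rw [show 2 * (m + 1) = 2 * m + 1 + 1 by ring, imbalance_staircase_succ, ih.2,
          pow_succ, pow_mul]
        push_cast
        ring
      refine ⟨heven, ?_⟩
      rw [imbalance_staircase_succ, heven, pow_mul]
      push_cast
      ring
  obtain ⟨m, rfl | rfl⟩ := Nat.even_or_odd' n
  · rw [(closed_form m).1]
    omega
  · rw [(closed_form m).2]
    omega

namespace YoungDiagram

variable (μ : YoungDiagram)

theorem rowLen_colLen_zero : μ.rowLen (μ.colLen 0) = 0 := by
  by_contra h
  exact lt_irrefl _ (mem_iff_lt_colLen.mp (mem_iff_lt_rowLen.mpr (Nat.pos_of_ne_zero h)))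

theorem isLowerSet_sdiff_pair {c d : ℕ × ℕ}
    (h : ∀ b ∈ μ, c ≤ b ∨ d ≤ b → b = c ∨ b = d) :
    IsLowerSet (↑(μ.cells \ {c, d}) : Set (ℕ × ℕ)) := by
  rw [coe_sdiff]
  exact μ.isLowerSet.sdiff fun b hb x hx hxb => by
    simp only [coe_insert, coe_singleton, Set.mem_insert_iff, Set.mem_singleton_iff] at hx ⊢
    rcases hx with rfl | rfl
    exacts [h b hb (Or.inl hxb), h b hb (Or.inr hxb)]

theorem isLowerSet_sdiff_horizontal {i : ℕ} (h : μ.rowLen (i + 1) + 2 ≤ μ.rowLen i) :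
    IsLowerSet (↑(μ.cells \ {(i, μ.rowLen i - 1), (i, μ.rowLen i - 2)}) : Set (ℕ × ℕ)) := by
  refine μ.isLowerSet_sdiff_pair fun ⟨b1, b2⟩ hb hle => ?_
  rw [mem_iff_lt_rowLen] at hb
  simp only [Prod.mk_le_mk, Prod.mk.injEq] at hle ⊢
  rcases (show i ≤ b1 by omega).eq_or_lt with rfl | hlt
  · omega
  · have := μ.rowLen_anti (i + 1) b1 hlt
    omega

theorem isLowerSet_sdiff_vertical {i : ℕ} (h : μ.rowLen (i + 1) = μ.rowLen i)
    (h2 : μ.rowLen (i + 2) < μ.rowLen i) :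
    IsLowerSet (↑(μ.cells \ {(i, μ.rowLen i - 1), (i + 1, μ.rowLen i - 1)}) :
      Set (ℕ × ℕ)) := by
  refine μ.isLowerSet_sdiff_pair fun ⟨b1, b2⟩ hb hle => ?_
  rw [mem_iff_lt_rowLen] at hb
  simp only [Prod.mk_le_mk, Prod.mk.injEq] at hle ⊢
  have := μ.rowLen_anti i b1 (by omega)
  rcases Nat.lt_or_ge b1 (i + 2) with hlt | hge
  · omega
  · have := μ.rowLen_anti (i + 2) b1 hge
    omega

theorem rowLen_succ_lt_of_pos
    (hequal : ∀ i, μ.rowLen (i + 1) = μ.rowLen i → μ.rowLen i ≤ μ.rowLen (i + 2))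
    {i : ℕ} (hi : 0 < μ.rowLen i) : μ.rowLen (i + 1) < μ.rowLen i := by
  by_contra hle
  have heq : μ.rowLen (i + 1) = μ.rowLen i :=
    le_antisymm (μ.rowLen_anti i (i + 1) (by omega)) (by omega)
  have constant : ∀ k, μ.rowLen (i + k + 1) = μ.rowLen i := by
    intro k
    induction k with
    | zero => exact heq
    | succ k ih =>
      have h1 := μ.rowLen_anti i (i + k) (by omega)
      have h2 := μ.rowLen_anti (i + k) (i + k + 1) (by omega)
      have h3 := hequal (i + k) (by omega)
      have h4 := μ.rowLen_anti (i + k + 1) (i + k + 2) (by omega)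
      rw [show i + (k + 1) + 1 = i + k + 2 by ring]
      omega
  have := μ.rowLen_anti (μ.colLen 0) (i + μ.colLen 0 + 1) (by omega)
  rw [constant, rowLen_colLen_zero] at this
  omega

theorem rowLen_eq_rowLen_zero_sub
    (hdrop : ∀ i, μ.rowLen i ≤ μ.rowLen (i + 1) + 1)
    (hequal : ∀ i, μ.rowLen (i + 1) = μ.rowLen i → μ.rowLen i ≤ μ.rowLen (i + 2))
    (i : ℕ) : μ.rowLen i = μ.rowLen 0 - i := by
  induction i with
  | zero => rfl
  | succ m ih =>
    rcases Nat.eq_zero_or_pos (μ.rowLen m) with h | h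
    · have := μ.rowLen_anti m (m + 1) (by omega)
      omega
    · have := μ.rowLen_succ_lt_of_pos hequal h
      have := hdrop m
      omega

/-- If no row ends in a horizontal domino and no two equal rows end in a vertical one, the row
lengths drop by exactly one until they reach zero. -/
theorem exists_removable_domino_or_cells_eq_staircase :
    (∃ c ∈ μ.cells, ∃ d ∈ μ.cells, CellAdjacent c d ∧
      IsLowerSet (↑(μ.cells \ {c, d}) : Set (ℕ × ℕ))) ∨
    μ.cells = staircase (μ.rowLen 0) := by
  have mem : ∀ {i j}, j < μ.rowLen i → (i, j) ∈ μ.cells := fun h =>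
    (mem_cells _).mpr (mem_iff_lt_rowLen.mpr h)
  by_cases hhoriz : ∃ i, μ.rowLen (i + 1) + 2 ≤ μ.rowLen i
  · obtain ⟨i, hi⟩ := hhoriz
    exact .inl ⟨(i, μ.rowLen i - 1), mem (by omega), (i, μ.rowLen i - 2), mem (by omega),
      .inl ⟨rfl, .inl (by omega)⟩, μ.isLowerSet_sdiff_horizontal hi⟩
  by_cases hvert : ∃ i, μ.rowLen (i + 1) = μ.rowLen i ∧ μ.rowLen (i + 2) < μ.rowLen i
  · obtain ⟨i, heq, hlt⟩ := hvert
    exact .inl ⟨(i, μ.rowLen i - 1), mem (by omega), (i + 1, μ.rowLen i - 1), mem (by omega),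
      .inr ⟨rfl, .inr rfl⟩, μ.isLowerSet_sdiff_vertical heq hlt⟩
  push Not at hhoriz hvert
  refine .inr (Finset.ext fun ⟨i, j⟩ => ?_)
  rw [mem_cells, mem_iff_lt_rowLen, mem_staircase,
    μ.rowLen_eq_rowLen_zero_sub (fun i => by have := hhoriz i; omega) hvert i]
  omega

end YoungDiagram

theorem hasDominoTiling_of_imbalance_eq_zero (μ : YoungDiagram) (h : imbalance μ.cells = 0) :
    HasDominoTiling μ := by
  induction hn : μ.cells.card using Nat.strong_induction_on generalizing μ with
  | _ n ih =>
  rcases μ.exists_removable_domino_or_cells_eq_staircase with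
    ⟨c, hc, d, hd, hcd, hlower⟩ | hstair
  · let ν : YoungDiagram := ⟨μ.cells \ {c, d}, hlower⟩
    have hcard : ν.cells.card < n := hn ▸ card_lt_card
      (sdiff_ssubset (insert_subset hc (singleton_subset_iff.mpr hd)) (insert_nonempty _ _))
    exact .of_cells_eq_sdiff hc hd hcd rfl
      (ih _ hcard ν ((imbalance_sdiff_pair hc hd hcd).trans h) rfl)
  · by_cases hempty : μ.rowLen 0 = 0
    · exact ⟨id, by simp [hstair, hempty, staircase]⟩
    · exact absurd (hstair ▸ h) (imbalance_staircase_ne_zero hempty)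

/-- a partition admits a domino tiling of its Young diagram if and only if
the number of cells `(i,j)` with `i+j` even equals the number of cells with `i+j` odd. -/
theorem hasDominoTiling_iff_balanced (lam : YoungDiagram) :
    HasDominoTiling lam ↔
      (lam.cells.filter (fun c => (c.1 + c.2) % 2 = 0)).card =
        (lam.cells.filter (fun c => (c.1 + c.2) % 2 = 1)).card := by
  rw [← imbalance_eq_zero_iff]
  exact ⟨HasDominoTiling.imbalance_eq_zero, hasDominoTiling_of_imbalance_eq_zero lam⟩
end
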